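/- arXiv:1701.05827 — 12 statements merged into one kernel-verified Lean document; each statement's English description precedes it below -/
import Mathlib

section
/- Let G be an abelian group, let v : G → Γ ∪ {∞} be a valuation on G, and let ≾ be a total quasi-order on G. Then v is compatible with ≾ if and only if for every γ ∈ Γ the set (G_γ)^{≿0} = {g ∈ G | v(g) > γ and 0 ≾ g} is ≾-convex. -/
/-- A total quasi-order: a reflexive, transitive, total binary relation. -/
def IsQO {A : Type*} (q : A → A → Prop) : Prop :=
  Reflexive q ∧ Transitive q ∧ ∀ a b, q a b ∨ q b a

/-- `a ∼ b`: the equivalence associated to a quasi-order. -/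
def QOEquiv {A : Type*} (q : A → A → Prop) (a b : A) : Prop := q a b ∧ q b a

/-- A subset `B` is `≾`-convex. -/
def QOConvex {A : Type*} (q : A → A → Prop) (B : Set A) : Prop :=
  ∀ a b c, b ∈ B → c ∈ B → q b a → q a c → a ∈ B

section Group
variable {G : Type*} [AddCommGroup G]

/-- An element `g` is v-type if `g ∼ -g`. -/
def VType (q : G → G → Prop) (g : G) : Prop := QOEquiv q g (-g)

/-- An element `g` is o-type if `g ≁ -g` or `g = 0`. -/
def OType (q : G → G → Prop) (g : G) : Prop := ¬ QOEquiv q g (-g) ∨ g = 0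

/-- A compatible quasi-order on an abelian group: a total q.o. satisfying (Q1) and (Q2). -/
def IsCompatQO (q : G → G → Prop) : Prop :=
  IsQO q ∧ (∀ g, QOEquiv q g 0 → g = 0) ∧
    ∀ x y z : G, q x y → ¬ QOEquiv q y z → q (x + z) (y + z)

/-- Condition (*). -/
def StarCond (q : G → G → Prop) : Prop :=
  (∀ g, QOEquiv q g 0 → g = 0) ∧
    ∀ f g h : G, q g h → ¬ QOEquiv q h (-f) → q (g + f) (h + f)

/-- A group order: a total, antisymmetric, translation invariant (reflexive transitive) order. -/
def IsGroupOrder (q : G → G → Prop) : Prop :=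
  IsQO q ∧ (∀ a b, q a b → q b a → a = b) ∧ ∀ x y z : G, q x y → q (x + z) (y + z)

/-- The relation induced by `q` on the quotient `G ⧸ H`:
`g₁ + H ≾ g₂ + H ↔ ∃ h₁ h₂ ∈ H, g₁ + h₁ ≾ g₂ + h₂`, equivalently there are
representatives `a` of `x` and `b` of `y` with `q a b`. -/
def IndRel (q : G → G → Prop) (H : AddSubgroup G) : G ⧸ H → G ⧸ H → Prop :=
  fun x y => ∃ a b : G, (a : G ⧸ H) = x ∧ (b : G ⧸ H) = y ∧ q a b

end Group

section Val
variable {G : Type*} [AddCommGroup G] {Γ : Type*} [LinearOrder Γ]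

/-- A valuation on an abelian group `G` with values in `Γ ∪ {∞}`. -/
def IsGroupVal (v : G → WithTop Γ) : Prop :=
  (∀ g, v g = ⊤ ↔ g = 0) ∧ ∀ g h, min (v g) (v h) ≤ v (g - h)

theorem IsGroupVal.le_neg {v : G → WithTop Γ} (hv : IsGroupVal v) (a : G) :
    v a ≤ v (-a) := by
  have h := hv.2 0 a
  rw [zero_sub] at h
  simpa [(hv.1 0).mpr rfl] using h

/-- The subgroup `G^γ = {g | v g ≥ γ}`. -/
def vGge (v : G → WithTop Γ) (hv : IsGroupVal v) (γ : Γ) : AddSubgroup G where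
  carrier := {g | (γ : WithTop Γ) ≤ v g}
  zero_mem' := by simp [Set.mem_setOf_eq, (hv.1 0).mpr rfl]
  add_mem' := by
    intro a b ha hb
    have h := hv.2 a (-b)
    rw [sub_neg_eq_add] at h
    exact le_trans (le_min ha (le_trans hb (hv.le_neg b))) h
  neg_mem' := by
    intro a ha
    exact le_trans ha (hv.le_neg a)

/-- The subgroup `G_γ = {g | v g > γ}`. -/
def vGlt (v : G → WithTop Γ) (hv : IsGroupVal v) (γ : Γ) : AddSubgroup G where
  carrier := {g | (γ : WithTop Γ) < v g}
  zero_mem' := by simp [Set.mem_setOf_eq, (hv.1 0).mpr rfl]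
  add_mem' := by
    intro a b ha hb
    have h := hv.2 a (-b)
    rw [sub_neg_eq_add] at h
    exact lt_of_lt_of_le (lt_min ha (lt_of_lt_of_le hb (hv.le_neg b))) h
  neg_mem' := by
    intro a ha
    exact lt_of_lt_of_le ha (hv.le_neg a)

/-- `v` is compatible with the q.o. `q`: `0 ≾ g ≾ h → v g ≥ v h`. -/
def ValCompat (v : G → WithTop Γ) (q : G → G → Prop) : Prop :=
  ∀ g h : G, q 0 g → q g h → v h ≤ v g

/-- The quotient `G^γ / G_γ`. -/
abbrev vQuot (v : G → WithTop Γ) (hv : IsGroupVal v) (γ : Γ) :=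
  (vGge v hv γ) ⧸ ((vGlt v hv γ).addSubgroupOf (vGge v hv γ))

/-- The class `g + G_γ` of an element `g ∈ G^γ` in `G^γ / G_γ`. -/
def vMk (v : G → WithTop Γ) (hv : IsGroupVal v) (γ : Γ) (g : G) (hg : g ∈ vGge v hv γ) :
    vQuot v hv γ :=
  QuotientAddGroup.mk ⟨g, hg⟩

/-- The q.o. induced by `q` on the quotient `G^γ / G_γ`. -/
def vInd (v : G → WithTop Γ) (hv : IsGroupVal v) (q : G → G → Prop) (γ : Γ) :
    vQuot v hv γ → vQuot v hv γ → Prop :=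
  fun x y => ∃ (a b : G) (ha : a ∈ vGge v hv γ) (hb : b ∈ vGge v hv γ),
    vMk v hv γ a ha = x ∧ vMk v hv γ b hb = y ∧ q a b

end Val

/-- A valuation on `G`, bundled with its value set. -/
structure ValuationOn (G : Type u) [AddCommGroup G] : Type (u + 1) where
  Γ : Type u
  [lo : LinearOrder Γ]
  v : G → WithTop Γ
  top_iff : ∀ g, v g = ⊤ ↔ g = 0
  sub_min : ∀ g h, min (v g) (v h) ≤ v (g - h)

attribute [instance] ValuationOn.lo

/-- A q.o. is valuational if it is induced by some valuation. -/
def IsValuational {G : Type u} [AddCommGroup G] (q : G → G → Prop) : Prop :=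
  ∃ V : ValuationOn G, ∀ g h, q g h ↔ V.v h ≤ V.v g

section CRel
variable {G : Type*} [AddCommGroup G]

/-- A compatible C-relation on an abelian group. -/
def IsCRel (C : G → G → G → Prop) : Prop :=
  (∀ x y z, C x y z → C x z y) ∧
  (∀ x y z, C x y z → ¬ C y x z) ∧
  (∀ w x y z, C x y z → C w y z ∨ C x w z) ∧
  (∀ x y, x ≠ y → C x y y) ∧
  (∀ f g h x, C f g h → C (x + f) (x + g) (x + h))

/-- A C-quasi-order: the q.o. associated to a compatible C-relation. -/
def IsCqo (q : G → G → Prop) : Prop :=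
  ∃ C : G → G → G → Prop, IsCRel C ∧ ∀ g h, q g h ↔ ¬ C g h 0

end CRel

theorem stmt1 {G : Type u} [AddCommGroup G] {Γ : Type*} [LinearOrder Γ]
    (v : G → WithTop Γ) (hv : IsGroupVal v) (q : G → G → Prop) (hq : IsQO q) :
    ValCompat v q ↔
      ∀ γ : Γ, QOConvex q {g : G | (γ : WithTop Γ) < v g ∧ q 0 g} := by
  constructor
  · intro hc γ a b c hb hc' hba hac
    refine ⟨lt_of_lt_of_le hc'.1 ?_, hq.2.1 hb.2 hba⟩
    exact hc a c (hq.2.1 hb.2 hba) hac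
  · intro hconv g h h0g hgh
    by_contra hlt
    push_neg at hlt
    have hne : v g ≠ ⊤ := fun ht => absurd (ht ▸ hlt) (by simp)
    obtain ⟨γ, hγ⟩ := WithTop.ne_top_iff_exists.mp hne
    have h0 : (0 : G) ∈ {g : G | (γ : WithTop Γ) < v g ∧ q 0 g} := by
      refine ⟨?_, hq.1 0⟩
      rw [(hv.1 0).mpr rfl]
      exact lt_of_le_of_ne le_top (by simp)
    have hh : h ∈ {g : G | (γ : WithTop Γ) < v g ∧ q 0 g} :=
      ⟨hγ ▸ hlt, hq.2.1 h0g hgh⟩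
    have := (hconv γ g 0 h h0 hh h0g hgh).1
    rw [← hγ] at this
    exact lt_irrefl _ this
end

section
/- Let G be an abelian group and let ≾ be a total quasi-order on G satisfying condition (*). For any subgroup H of G, H is ≾-convex if and only if the relation on G/H defined by g₁ + H ≾ g₂ + H ⇔ ∃ h₁, h₂ ∈ H with g₁ + h₁ ≾ g₂ + h₂ is transitive (hence a total q.o. on G/H) and satisfies cl(0 + H) = {0 + H}. -/
theorem stmt2 {G : Type u} [AddCommGroup G] (q : G → G → Prop) (hq : IsQO q)
    (hstar : StarCond q) (H : AddSubgroup G) :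
    QOConvex q (H : Set G) ↔
      (Transitive (IndRel q H) ∧
        ∀ x : G ⧸ H, QOEquiv (IndRel q H) x 0 → x = 0) := by
  obtain ⟨hrefl, htr, htot⟩ := hq
  obtain ⟨hcl0, hst⟩ := hstar
  constructor
  · intro hconv
    constructor
    · rintro x y z ⟨a, b, rfl, rfl, hab⟩ ⟨a', c, hy, rfl, hac⟩
      have hd : a' - b ∈ H := by
        have := QuotientAddGroup.eq.mp hy
        have h2 := H.neg_mem this
        simpa [neg_add_rev, sub_eq_add_neg, add_comm] using h2
      set d := a' - b with hdef
      have hnd : -d ∈ H := H.neg_mem hd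
      by_cases h1 : QOEquiv q b (-d)
      · by_cases h2 : QOEquiv q c d
        · -- hard case : b ∼ -d, c ∼ d
          rcases htot (-d) d with hmd | hdm
          · -- a ≾ b ≾ -d ≾ d ≾ c
            exact ⟨a, c, rfl, rfl, htr (htr (htr hab h1.1) hmd) h2.2⟩
          · rcases htot a c with hac' | hca
            · exact ⟨a, c, rfl, rfl, hac'⟩
            · have haH : a ∈ H := hconv a d (-d) hd hnd (htr h2.2 hca) (htr hab h1.1)
              have hcH : c ∈ H := hconv c d (-d) hd hnd h2.2 (htr h2.1 hdm)
              refine ⟨a, a, rfl, ?_, hrefl a⟩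
              exact QuotientAddGroup.eq.mpr (H.add_mem (H.neg_mem haH) hcH)
        · -- translate a' ≾ c by -d
          have := hst (-d) a' c hac (by simpa [neg_neg] using h2)
          have hbc : q b (c + -d) := by
            have hb : a' + -d = b := by rw [hdef]; abel
            rwa [hb] at this
          refine ⟨a, c + -d, rfl, ?_, htr hab hbc⟩
          exact QuotientAddGroup.eq.mpr (by simpa [neg_add_rev, add_comm, sub_eq_add_neg] using hd)
      · -- translate a ≾ b by d
        have := hst d a b hab h1
        have hb : b + d = a' := by rw [hdef]; abel
        rw [hb] at this
        exact ⟨a + d, c, QuotientAddGroup.eq.mpr (by simpa using hnd), rfl, htr this hac⟩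
    · rintro x ⟨⟨a, b, ha, hb, hab⟩, ⟨a', b', ha', hb', hab'⟩⟩
      have hbH : b ∈ H := (QuotientAddGroup.eq_zero_iff b).mp hb
      have ha'H : a' ∈ H := (QuotientAddGroup.eq_zero_iff a').mp ha'
      have heH : b' - a ∈ H := by
        have : (b' : G ⧸ H) = (a : G ⧸ H) := by rw [hb', ha]
        have := H.neg_mem (QuotientAddGroup.eq.mp this)
        simpa [neg_add_rev, sub_eq_add_neg, add_comm] using this
      set e := b' - a with hedef
      suffices haH : a ∈ H by rw [← ha]; exact (QuotientAddGroup.eq_zero_iff a).mpr haH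
      by_cases hbe : QOEquiv q b' e
      · have hb'H : b' ∈ H := hconv b' e e heH heH hbe.2 hbe.1
        have : b' - e ∈ H := H.sub_mem hb'H heH
        simpa [hedef] using this
      · have := hst (-e) a' b' hab' (by simpa [neg_neg] using hbe)
        have hba : b' + -e = a := by rw [hedef]; abel
        rw [hba] at this
        exact hconv a (a' + -e) b (H.add_mem ha'H (H.neg_mem heH)) hbH this hab
  · rintro ⟨_, hcl⟩ a b c hb hc hba hac
    have h1 : IndRel q H 0 (a : G ⧸ H) :=
      ⟨b, a, (QuotientAddGroup.eq_zero_iff b).mpr hb, rfl, hba⟩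
    have h2 : IndRel q H (a : G ⧸ H) 0 :=
      ⟨a, c, rfl, (QuotientAddGroup.eq_zero_iff c).mpr hc, hac⟩
    exact (QuotientAddGroup.eq_zero_iff a).mp (hcl _ ⟨h2, h1⟩)
end

section
/- Let G be an abelian group, let ≾ be a total quasi-order on G satisfying condition (*), and let H be a ≾-convex subgroup of G. Then for every g ∈ G \ H: g ≾ −g holds if and only if g + H ≾ −g + H holds in the relation induced on G/H; in particular, g is v-type (resp. o-type) if and only if g + H is v-type (resp. o-type). -/
section Aux
variable {G : Type u} [AddCommGroup G] {q : G → G → Prop} {H : AddSubgroup G}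

lemma aux_not_equiv_mem (hH : QOConvex q (H : Set G)) {x h : G}
    (hx : x ∉ H) (hh : h ∈ H) : ¬ QOEquiv q x h :=
  fun e => hx (hH x h h hh hh e.2 e.1)

lemma aux_dich (hq : IsQO q) (hH : QOConvex q (H : Set G)) {g : G} (hg : g ∉ H) :
    (∀ h ∈ H, ¬ q h g) ∨ (∀ h ∈ H, ¬ q g h) := by
  by_contra hcon
  push_neg at hcon
  obtain ⟨⟨h1, hh1, h1g⟩, ⟨h2, hh2, gh2⟩⟩ := hcon
  exact hg (hH g h1 h2 hh1 hh2 h1g gh2)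

lemma aux_key (hq : IsQO q) (hstar : StarCond q) (hH : QOConvex q (H : Set G))
    {g : G} (hg : g ∉ H) (hind : IndRel q H (g : G ⧸ H) ((-g : G) : G ⧸ H)) :
    q g (-g) := by
  obtain ⟨a, b, ha, hb, hab⟩ := hind
  have star := hstar.2
  have total := hq.2.2
  have trans := hq.2.1
  have hag : -a + g ∈ H := (QuotientAddGroup.eq).mp ha
  have hbg : -b + -g ∈ H := (QuotientAddGroup.eq).mp hb
  have hgH' : -g ∉ H := fun h => hg (by simpa using H.neg_mem h)
  have hbH : b ∉ H := by
    intro hb'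
    apply hgH'
    have := H.add_mem hbg hb'
    have e : (-b + -g) + b = -g := by abel
    rwa [e] at this
  -- step 1 : q g (b + (-a + g))
  have h1 : q g (b + (-a + g)) := by
    have := star (-a + g) a b hab (aux_not_equiv_mem hH hbH (H.neg_mem hag))
    simpa [add_neg_cancel_left] using this
  set c := b + (-a + g) with hc_def
  have hgc : c + g ∈ H := by
    have hbgH : b + g ∈ H := by
      have := H.neg_mem hbg
      have e : -(-b + -g) = b + g := by abel
      rwa [e] at this
    have := H.add_mem hbgH hag
    have e : (b + g) + (-a + g) = c + g := by rw [hc_def]; abel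
    rwa [e] at this
  by_contra hn
  have hng : q (-g) g := (total g (-g)).resolve_left hn
  have hne : ¬ QOEquiv q g (-g) := fun e => hn e.1
  have hne' : ¬ QOEquiv q (-g) g := fun e => hn e.2
  have hc : ¬ QOEquiv q c (-g) := fun e => hn (trans h1 e.1)
  have h2c : q (g + g) (c + g) := star g g c h1 hc
  have h02 : q 0 (g + g) := by
    have := star g (-g) g hng hne
    simpa using this
  rcases aux_dich hq hH hg with hA | hB
  · -- g strictly below H
    have hg0 : q g 0 := (total 0 g).resolve_left (hA 0 H.zero_mem)
    have hn0g : ¬ QOEquiv q 0 (-g) := by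
      have := aux_not_equiv_mem hH hgH' H.zero_mem
      exact fun e => this ⟨e.2, e.1⟩
    have h2g : q (g + g) (0 + g) := star g g 0 hg0 hn0g
    rw [zero_add] at h2g
    exact hA 0 H.zero_mem (trans h02 h2g)
  · -- g strictly above H
    have h2H : g + g ∈ H := hH (g + g) 0 (c + g) H.zero_mem hgc h02 h2c
    rcases aux_dich hq hH hgH' with hB1 | hB2
    · -- -g strictly below H
      have hng0 : q (-g) 0 := (total 0 (-g)).resolve_left (hB1 0 H.zero_mem)
      have hn0g : ¬ QOEquiv q 0 (-(-g)) := by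
        rw [neg_neg]
        have := aux_not_equiv_mem hH hg H.zero_mem
        exact fun e => this ⟨e.2, e.1⟩
      have := star (-g) (-g) 0 hng0 hn0g
      rw [zero_add] at this
      have hmem : -g + -g ∈ H := by
        have := H.neg_mem h2H
        have e : -(g + g) = -g + -g := by abel
        rwa [e] at this
      exact hB1 (-g + -g) hmem this
    · -- -g strictly above H
      have h2neg : q (g + g) (-g) := (total (-g) (g + g)).resolve_left (hB2 (g + g) h2H)
      have hnee : ¬ QOEquiv q (-g) (-(-g)) := by rw [neg_neg]; exact hne'
      have := star (-g) (g + g) (-g) h2neg hnee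
      have e : g + g + -g = g := by abel
      rw [e] at this
      have hmem : -g + -g ∈ H := by
        have := H.neg_mem h2H
        have e2 : -(g + g) = -g + -g := by abel
        rwa [e2] at this
      exact hB (-g + -g) hmem this

end Aux

theorem stmt3 {G : Type u} [AddCommGroup G] (q : G → G → Prop) (hq : IsQO q)
    (hstar : StarCond q) (H : AddSubgroup G) (hH : QOConvex q (H : Set G)) :
    ∀ g : G, g ∉ H →
      ((q g (-g) ↔ IndRel q H (g : G ⧸ H) (-g : G)) ∧
        (VType q g ↔ VType (IndRel q H) (g : G ⧸ H)) ∧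
        (OType q g ↔ OType (IndRel q H) (g : G ⧸ H))) := by
  intro g hg
  have hgH' : -g ∉ H := fun h => hg (by simpa using H.neg_mem h)
  have part1 : q g (-g) ↔ IndRel q H (g : G ⧸ H) ((-g : G) : G ⧸ H) := by
    constructor
    · intro h; exact ⟨g, -g, rfl, rfl, h⟩
    · exact aux_key hq hstar hH hg
  have part2 : VType q g ↔ VType (IndRel q H) (g : G ⧸ H) := by
    constructor
    · rintro ⟨h1, h2⟩
      exact ⟨⟨g, -g, rfl, by simp, h1⟩, ⟨-g, g, by simp, rfl, h2⟩⟩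
    · rintro ⟨e1, e2⟩
      constructor
      · exact aux_key hq hstar hH hg (by simpa using e1)
      · have := aux_key hq hstar hH hgH' (by simpa using e2)
        simpa using this
  refine ⟨part1, part2, ?_⟩
  have gne0 : g ≠ 0 := fun h => hg (h ▸ H.zero_mem)
  have qne0 : (g : G ⧸ H) ≠ 0 := fun h => hg ((QuotientAddGroup.eq_zero_iff g).mp h)
  constructor
  · rintro (h | h)
    · exact Or.inl (fun e => h (part2.mpr e))
    · exact absurd h gne0
  · rintro (h | h)
    · exact Or.inl (fun e => h (part2.mp e))
    · exact absurd h qne0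
end

section
/- Let ≾ be a compatible quasi-order on an abelian group G and let H be a subgroup of G. Then H is ≾-convex if and only if H^{≿0} = {h ∈ H | 0 ≾ h} is ≾-convex. -/
theorem stmt5 {G : Type u} [AddCommGroup G] (q : G → G → Prop)
    (hq : IsCompatQO q) (H : AddSubgroup G) :
    QOConvex q (H : Set G) ↔ QOConvex q {h : G | h ∈ H ∧ q 0 h} := by
  obtain ⟨⟨hrefl, htrans, htotal⟩, hQ1, hQ2⟩ := hq
  constructor
  · -- H convex → H^{≥0} convex
    intro hH a b c hb hc hba hac
    exact ⟨hH a b c hb.1 hc.1 hba hac, htrans hb.2 hba⟩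
  · -- H^{≥0} convex → H convex
    intro hP a b c hb hc hba hac
    by_cases h0a : q 0 a
    · rcases htotal 0 c with h0c | hc0
      · exact (hP a 0 c ⟨H.zero_mem, hrefl 0⟩ ⟨hc, h0c⟩ h0a hac).1
      · have ha : a = 0 := hQ1 a ⟨htrans hac hc0, h0a⟩
        simpa [ha] using H.zero_mem
    · have ha0 : q a 0 := (htotal a 0).resolve_right h0a
      have hane : a ≠ 0 := fun h => h0a (h ▸ hrefl (0 : G))
      have h0na : q 0 (-a) := by
        have h := hQ2 a 0 (-a) ha0 (fun ⟨h1, h2⟩ =>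
          hane (neg_eq_zero.mp (hQ1 (-a) ⟨h2, h1⟩)))
        simpa using h
      have hana : ¬ QOEquiv q a (-a) := fun ⟨_, h2⟩ => h0a (htrans h0na h2)
      -- goal: a ∈ H; suffices -a ∈ H with 0 ≾ -a ≾ d for some d ∈ H^{≥0}
      have key : ∀ d : G, d ∈ H → q (-a) d → a ∈ H := by
        intro d hd hqd
        have h0d : q 0 d := htrans h0na hqd
        have := hP (-a) 0 d ⟨H.zero_mem, hrefl 0⟩ ⟨hd, h0d⟩ h0na hqd
        simpa using H.neg_mem this.1
      by_cases hkey : QOEquiv q a (-(a + b))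
      · -- degenerate case: show b = -a - a
        have hsim : QOEquiv q (-(a + b) + -a) (a + -a) := by
          constructor
          · exact hQ2 _ _ _ hkey.2 hana
          · exact hQ2 _ _ _ hkey.1 (fun ⟨h1, h2⟩ =>
              hana ⟨htrans hkey.1 h1, htrans h2 hkey.2⟩)
        have hz : -(a + b) + -a = 0 := by
          apply hQ1
          have e : a + -a = (0 : G) := by abel
          rwa [e] at hsim
        have hab : a + b = -a := by
          have h' : (a + b) + a = 0 := by
            rw [show (a + b) + a = -(-(a + b) + -a) from by abel, hz, neg_zero]
          exact eq_neg_of_add_eq_zero_left h'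
        have hbne : b ≠ 0 := by
          intro h
          exact h0a (by simpa [h] using hba)
        have h0b : ¬ QOEquiv q 0 b := fun ⟨h1, h2⟩ => hbne (hQ1 b ⟨h2, h1⟩)
        have h := hQ2 a 0 b ha0 h0b
        rw [hab, zero_add] at h
        exact key b hb h
      · have h := hQ2 b a (-(a + b)) hba hkey
        have e1 : b + -(a + b) = -a := by abel
        have e2 : a + -(a + b) = -b := by abel
        rw [e1, e2] at h
        exact key (-b) (H.neg_mem hb) h
end

section
/- Let ≾ be a compatible quasi-order on an abelian group G. Then ≾ is a group order (i.e., it is additionally antisymmetric and translation-invariant) if and only if every element of G is o-type. -/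
theorem stmt6 {G : Type u} [AddCommGroup G] (q : G → G → Prop)
    (hq : IsCompatQO q) :
    IsGroupOrder q ↔ ∀ g : G, OType q g := by
  obtain ⟨⟨hrefl, htrans, htot⟩, hQ1, hQ2⟩ := hq
  constructor
  · rintro ⟨_, hanti, hinv⟩ g
    by_cases hg : g = 0
    · exact Or.inr hg
    refine Or.inl ?_
    rintro ⟨h1, h2⟩
    have heq : g = -g := hanti _ _ h1 h2
    have hgg : g + g = 0 := eq_neg_iff_add_eq_zero.mp heq
    apply hg
    rcases htot g 0 with h | h
    · have h' := hinv g 0 g h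
      rw [hgg, zero_add] at h'
      exact hanti _ _ h h'
    · have h' := hinv 0 g g h
      rw [hgg, zero_add] at h'
      exact hanti _ _ h' h
  · intro hO
    have key : ∀ c d : G, q c d → q (c - d) 0 := by
      intro c d hcd
      rcases hO d with hd | hd
      · have h' := hQ2 c d (-d) hcd hd
        simpa [sub_eq_add_neg] using h'
      · subst hd; simpa using hcd
    have hanti : ∀ a b : G, q a b → q b a → a = b := by
      intro a b hab hba
      have h1 : q (a - b) 0 := key a b hab
      have h2 : q (b - a) 0 := key b a hba
      by_contra hne
      have hu : a - b ≠ 0 := sub_ne_zero.mpr hne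
      have hne2 : ¬ QOEquiv q 0 (-(a - b)) := by
        rintro ⟨hc1, hc2⟩
        have := hQ1 (-(a - b)) ⟨hc2, hc1⟩
        rw [neg_eq_zero] at this
        exact hu this
      have h3 := hQ2 (a - b) 0 (-(a - b)) h1 hne2
      rw [add_neg_cancel, zero_add] at h3
      have h4 : -(a - b) = 0 := hQ1 _ ⟨by simpa [neg_sub] using h2, h3⟩
      rw [neg_eq_zero] at h4
      exact hu h4
    refine ⟨⟨hrefl, htrans, htot⟩, hanti, ?_⟩
    intro x y z hxy
    have h1 : q (x - y) 0 := key x y hxy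
    by_cases h : y + z = 0
    · have e : x + z = x - y := by rw [← sub_zero (x + z), ← h]; abel
      rw [h, e]
      exact h1
    · have hne2 : ¬ QOEquiv q 0 (y + z) := fun hc => h (hQ1 _ ⟨hc.2, hc.1⟩)
      have h2 := hQ2 (x - y) 0 (y + z) h1 hne2
      have e : x - y + (y + z) = x + z := by abel
      rw [e, zero_add] at h2
      exact h2
end

section
/- Let ≾ be a compatible quasi-order on an abelian group G. Then ≾ is valuational (i.e., there exists a valuation v on G with g ≾ h ⇔ v(g) ≥ v(h)) if and only if every element of G is v-type. -/
namespace Stmt7Aux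

variable {G : Type u} [AddCommGroup G] (q : G → G → Prop)

/-- The setoid of `∼`-classes. -/
def qSetoid (hq : IsQO q) : Setoid G where
  r := QOEquiv q
  iseqv := ⟨fun a => ⟨hq.1 a, hq.1 a⟩, fun h => ⟨h.2, h.1⟩,
    fun h1 h2 => ⟨hq.2.1 h1.1 h2.1, hq.2.1 h2.2 h1.2⟩⟩

/-- The reversed linear order on the `∼`-classes. -/
noncomputable def qLO (hq : IsQO q) : LinearOrder (Quotient (qSetoid q hq)) where
  le x y := Quotient.liftOn₂ x y (fun a b => q b a)
    (fun a b a' b' ha hb => propext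
      ⟨fun h => hq.2.1 hb.2 (hq.2.1 h ha.1), fun h => hq.2.1 hb.1 (hq.2.1 h ha.2)⟩)
  le_refl x := Quotient.inductionOn x fun a => hq.1 a
  le_trans x y z := Quotient.inductionOn₃ x y z fun _ _ _ h1 h2 => hq.2.1 h2 h1
  le_antisymm x y := Quotient.inductionOn₂ x y fun _ _ h1 h2 => Quotient.sound ⟨h2, h1⟩
  le_total x y := Quotient.inductionOn₂ x y fun a b => hq.2.2 b a
  toDecidableLE := fun _ _ => Classical.dec _

theorem zero_max (hq : IsCompatQO q) (ht : ∀ g : G, VType q g) (g : G) : q 0 g := by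
  obtain ⟨⟨hrefl, htrans, htotal⟩, hQ1, hQ2⟩ := hq
  by_contra h0
  have hg0 : q g 0 := (htotal g 0).resolve_right h0
  have hne : ¬ QOEquiv q 0 (-g) := by
    rintro ⟨h1, h2⟩
    have : -g = 0 := hQ1 (-g) ⟨h2, h1⟩
    have : g = 0 := by simpa [neg_eq_zero] using this
    exact h0 (this ▸ hrefl 0)
  have := hQ2 g 0 (-g) hg0 hne
  rw [add_neg_cancel, zero_add] at this
  exact h0 (htrans this (ht g).2)

theorem q_zero_iff (hq : IsCompatQO q) (ht : ∀ g : G, VType q g) (g : G) :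
    q g 0 ↔ g = 0 := by
  constructor
  · intro h
    exact hq.2.1 g ⟨h, zero_max q hq ht g⟩
  · rintro rfl
    exact hq.1.1 0

/-- The key ultrametric inequality. -/
theorem ultrametric (hq : IsCompatQO q) (ht : ∀ g : G, VType q g) (g h : G)
    (hgh : q g h) : q (g - h) h := by
  obtain ⟨⟨hrefl, htrans, htotal⟩, hQ1, hQ2⟩ := hq
  by_contra hn
  have h1 : q h (g - h) := (htotal h (g - h)).resolve_right hn
  have hne : ¬ QOEquiv q (g - h) (-g) := by
    rintro ⟨e1, e2⟩
    -- then g - h ≾ -g ≾ g ≾ h, hence g - h ≾ h, contradiction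
    have e3 : q (g - h) g := htrans e1 (ht g).2
    exact hn (htrans e3 hgh)
  have h2 := hQ2 h (g - h) (-g) h1 hne
  have h3 : q (h - g) (-h) := by
    have e : g - h + -g = -h := by abel
    have e' : h + -g = h - g := by abel
    rwa [e, e'] at h2
  have h4 : q (g - h) (h - g) := by
    have := (ht (g - h)).1
    rwa [neg_sub] at this
  exact hn (htrans (htrans h4 h3) (ht h).2)

/-- Fix of `hne` above: it used `hgh` in a sloppy way; keep it simple. -/
theorem ultrametric' (hq : IsCompatQO q) (ht : ∀ g : G, VType q g) (g h : G)
    (hgh : q h g) : q (g - h) g := by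
  have := ultrametric q hq ht h g hgh
  have h4 : q (g - h) (h - g) := by
    have := (ht (g - h)).1
    rwa [neg_sub] at this
  exact hq.1.2.1 h4 this

end Stmt7Aux

theorem stmt7 {G : Type u} [AddCommGroup G] (q : G → G → Prop)
    (hq : IsCompatQO q) :
    IsValuational q ↔ ∀ g : G, VType q g := by
  constructor
  · rintro ⟨V, hV⟩ g
    have h0 : V.v 0 = ⊤ := (V.top_iff 0).mpr rfl
    have h1 : V.v g ≤ V.v (-g) := by
      have := V.sub_min 0 g
      rw [zero_sub] at this
      simpa [h0] using this
    have h2 : V.v (-g) ≤ V.v g := by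
      have := V.sub_min 0 (-g)
      rw [zero_sub, neg_neg] at this
      simpa [h0] using this
    exact ⟨(hV g (-g)).mpr h2, (hV (-g) g).mpr h1⟩
  · intro ht
    classical
    have hqo := hq.1
    have htrans := hqo.2.1
    letI lo := Stmt7Aux.qLO q hqo
    refine ⟨⟨Quotient (Stmt7Aux.qSetoid q hqo),
      fun g => if g = 0 then ⊤ else (Quotient.mk (Stmt7Aux.qSetoid q hqo) g : WithTop _),
      ?_, ?_⟩, ?_⟩
    · intro g
      by_cases hg : g = 0 <;> simp [hg]
    · intro g h
      by_cases hgh : g = h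
      · simp [hgh]
      by_cases hg : g = 0
      · subst hg
        by_cases hh : h = 0
        · simp [hh]
        · have hsub : (0 : G) - h ≠ 0 := sub_ne_zero.mpr hgh
          simp only [if_pos rfl, if_true, if_neg hh, if_neg hsub]
          rw [min_comm, min_eq_left le_top]
          rw [WithTop.coe_le_coe]
          show q ((0 : G) - h) h
          rw [zero_sub]
          exact (ht h).2
      by_cases hh : h = 0
      · subst hh
        have hsub : g - 0 ≠ 0 := by simpa using hg
        simp only [if_neg hg, if_pos rfl, if_true, if_neg hsub]
        rw [min_eq_left le_top]
        rw [WithTop.coe_le_coe]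
        show q (g - 0) g
        rw [sub_zero]
        exact hqo.1 g
      · have hsub : g - h ≠ 0 := sub_ne_zero.mpr hgh
        simp only [if_neg hg, if_neg hh, if_neg hsub]
        rw [← WithTop.coe_min, WithTop.coe_le_coe]
        rcases hqo.2.2 g h with hle | hle
        · have : q (g - h) h := Stmt7Aux.ultrametric q hq ht g h hle
          calc min (Quotient.mk (Stmt7Aux.qSetoid q hqo) g)
                (Quotient.mk (Stmt7Aux.qSetoid q hqo) h)
              ≤ Quotient.mk (Stmt7Aux.qSetoid q hqo) h := min_le_right _ _
            _ ≤ Quotient.mk (Stmt7Aux.qSetoid q hqo) (g - h) := this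
        · have : q (g - h) g := Stmt7Aux.ultrametric' q hq ht g h hle
          calc min (Quotient.mk (Stmt7Aux.qSetoid q hqo) g)
                (Quotient.mk (Stmt7Aux.qSetoid q hqo) h)
              ≤ Quotient.mk (Stmt7Aux.qSetoid q hqo) g := min_le_left _ _
            _ ≤ Quotient.mk (Stmt7Aux.qSetoid q hqo) (g - h) := this
    · intro g h
      by_cases hh : h = 0
      · subst hh
        by_cases hg : g = 0
        · simp [hg, hqo.1 (0 : G)]
        · simp only [if_pos rfl, if_true, if_neg hg, top_le_iff]
          constructor
          · intro hq0
            exact absurd ((Stmt7Aux.q_zero_iff q hq ht g).mp hq0) hg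
          · intro habs
            exact absurd (WithTop.coe_ne_top habs) (fun h => h)
      by_cases hg : g = 0
      · subst hg
        simp only [if_pos rfl, if_true, if_neg hh, le_top, iff_true]
        exact Stmt7Aux.zero_max q hq ht h
      · simp only [if_neg hg, if_neg hh, WithTop.coe_le_coe]
        exact Iff.rfl
end

section
/- Let ≾ be a compatible quasi-order on an abelian group G and let v : G → Γ ∪ {∞} be a valuation on G. Then the following are equivalent: (1) every G^γ is ≾-convex; (2) every G_γ is ≾-convex; (3) for every γ ∈ Γ, ≾ induces a q.o. ≾_γ on G^γ/G_γ (i.e., the induced relation is transitive) and ≾_γ is a compatible q.o.; (4) v is compatible with ≾. Moreover, in this case ≾ is valuational if and only if each ≾_γ is valuational, and ≾ is a group order if and only if each ≾_γ is a group order. -/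
section Basic
variable {G : Type*} [AddCommGroup G] {q : G → G → Prop}

lemma co_refl (hq : IsCompatQO q) (a : G) : q a a := hq.1.1 a

lemma co_trans (hq : IsCompatQO q) {a b c : G} (h1 : q a b) (h2 : q b c) : q a c :=
  hq.1.2.1 h1 h2

lemma co_total (hq : IsCompatQO q) (a b : G) : q a b ∨ q b a := hq.1.2.2 a b

lemma co_q1 (hq : IsCompatQO q) {g : G} (h1 : q g 0) (h2 : q 0 g) : g = 0 :=
  hq.2.1 g ⟨h1, h2⟩

lemma co_q2 (hq : IsCompatQO q) {x y : G} (z : G) (h : q x y) (hne : ¬ QOEquiv q y z) :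
    q (x + z) (y + z) := hq.2.2 x y z h hne

/-- `g ≾ 0`, `g ≠ 0` implies `0 ≾ -g`. -/
lemma co_neg_pos (hq : IsCompatQO q) {g : G} (h : q g 0) (hne : g ≠ 0) : q 0 (-g) := by
  have hne' : ¬ QOEquiv q 0 (-g) := by
    rintro ⟨h1, h2⟩
    exact hne (by simpa using co_q1 hq h2 h1)
  have := co_q2 hq (-g) h hne'
  simpa using this

/-- If `¬ (0 ≾ a)` then `a ≾ 0`, `a ≠ 0`, `0 ≾ -a`, `¬ (-a ≾ 0)`. -/
lemma co_sneg (hq : IsCompatQO q) {a : G} (ha : ¬ q 0 a) :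
    q a 0 ∧ a ≠ 0 ∧ q 0 (-a) ∧ ¬ q (-a) 0 := by
  have hne : a ≠ 0 := by rintro rfl; exact ha (co_refl hq 0)
  have ha0 : q a 0 := (co_total hq a 0).resolve_right ha
  have hna : q 0 (-a) := co_neg_pos hq ha0 hne
  refine ⟨ha0, hne, hna, fun hcon => ?_⟩
  have : q 0 a := by simpa using co_neg_pos hq hcon (by simpa using hne)
  exact ha this

/-- F5 : `b ≾ a ≺ 0` implies `-a ≾ -b`. -/
lemma co_neg_antitone (hq : IsCompatQO q) {a b : G} (hba : q b a) (ha : ¬ q 0 a) :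
    q (-a) (-b) := by
  obtain ⟨ha0, hane, hnega, hnega'⟩ := co_sneg hq ha
  have hb : ¬ q 0 b := fun h => ha (co_trans hq h hba)
  obtain ⟨hb0, hbne, hnegb, hnegb'⟩ := co_sneg hq hb
  by_contra hcon
  have hba' : q (-b) (-a) := (co_total hq (-b) (-a)).resolve_right hcon
  -- step 1 : 0 ≾ a - b
  have h1 : q 0 (a + -b) := by
    have hne1 : ¬ QOEquiv q a (-b) := by
      rintro ⟨_, h2⟩
      exact ha (co_trans hq hnegb h2)
    simpa using co_q2 hq (-b) hba hne1
  -- step 2 : a - b ≾ 0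
  have h2 : q (a + -b) 0 := by
    have hne2 : ¬ QOEquiv q (-a) a := by
      rintro ⟨h1', _⟩
      exact ha (co_trans hq hnega h1')
    have := co_q2 hq a hba' hne2
    simpa [neg_add_eq_sub, sub_eq_add_neg, add_comm] using this
  have : a + -b = 0 := co_q1 hq h2 h1
  have hab : a = b := by
    have := sub_eq_zero.mp (by simpa [sub_eq_add_neg] using this)
    exact this
  exact hcon (hab ▸ co_refl hq (-a))

end Basic
section ValBasic
variable {G : Type*} [AddCommGroup G] {Γ : Type*} [LinearOrder Γ]
  {v : G → WithTop Γ} {q : G → G → Prop}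

lemma gv_zero (hv : IsGroupVal v) : v 0 = ⊤ := (hv.1 0).mpr rfl

lemma gv_neg (hv : IsGroupVal v) (g : G) : v (-g) = v g :=
  le_antisymm (by simpa using hv.le_neg (-g)) (hv.le_neg g)

lemma gv_add (hv : IsGroupVal v) (g h : G) : min (v g) (v h) ≤ v (g + h) := by
  have := hv.2 g (-h)
  rw [sub_neg_eq_add, gv_neg hv h] at this
  exact this

lemma gv_sub (hv : IsGroupVal v) (g h : G) : min (v g) (v h) ≤ v (g - h) :=
  hv.2 g h

lemma gv_sub_comm (hv : IsGroupVal v) (g h : G) : v (g - h) = v (h - g) := by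
  rw [← gv_neg hv (g - h), neg_sub]

lemma mem_vGge {hv : IsGroupVal v} {γ : Γ} {g : G} :
    g ∈ vGge v hv γ ↔ (γ : WithTop Γ) ≤ v g := Iff.rfl

lemma mem_vGlt {hv : IsGroupVal v} {γ : Γ} {g : G} :
    g ∈ vGlt v hv γ ↔ (γ : WithTop Γ) < v g := Iff.rfl

/-- Claim W : if `0 ≾ t` and `v t < v c` then `c ≺ t`. -/
lemma claimW (hq : IsCompatQO q) (hvc : ValCompat v q) {t c : G}
    (ht : q 0 t) (hlt : v t < v c) : q c t ∧ ¬ q t c := by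
  have hntc : ¬ q t c := fun h => absurd (hvc t c ht h) (not_le.mpr hlt)
  exact ⟨(co_total hq c t).resolve_right hntc, hntc⟩

/-- Lemma S : there is no `t` with `0 ≾ t` and `v (t - a) > v a` when `a ≺ 0`. -/
lemma lemS (hq : IsCompatQO q) (hv : IsGroupVal v) (hvc : ValCompat v q) {a t : G}
    (ha : ¬ q 0 a) (ht : q 0 t) (hd : v a < v (t - a)) : False := by
  set c := t - a with hc
  have h1 : v a ≤ v t := by
    have h := gv_add hv a c
    rw [show a + c = t from by simp [hc]] at h
    exact (le_min le_rfl hd.le).trans h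
  have h2 : v t ≤ v a := by
    by_contra hcon
    push_neg at hcon
    have hmin : v a < min (v t) (v c) := lt_min hcon hd
    have h := gv_sub hv t c
    rw [show t - c = a from by simp [hc]] at h
    exact absurd h (not_le.mpr hmin)
  have hd' : v t < v c := h2.trans_lt hd
  have hd'' : v t < v (-c) := by rwa [gv_neg hv]
  have w1 := claimW hq hvc ht hd'
  have w2 := claimW hq hvc ht hd''
  have hne : ¬ QOEquiv q t (-c) := fun h' => w2.2 h'.1
  have := co_q2 hq (-c) w1.1 hne
  rw [add_neg_cancel, show t + -c = a from by simp [hc]] at this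
  exact ha this

end ValBasic
section Convex
variable {G : Type*} [AddCommGroup G] {Γ : Type*} [LinearOrder Γ]
  {v : G → WithTop Γ} {q : G → G → Prop}

lemma vc_of_convGge (hv : IsGroupVal v) (hq : IsCompatQO q)
    (hc : ∀ γ : Γ, QOConvex q ((vGge v hv γ : AddSubgroup G) : Set G)) :
    ValCompat v q := by
  intro g h h0g hgh
  rcases eq_or_ne h 0 with rfl | hne
  · have : g = 0 := co_q1 hq hgh h0g
    subst this; exact le_rfl
  · obtain ⟨γ, hγ⟩ := WithTop.ne_top_iff_exists.mp ((hv.1 h).not.mpr hne)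
    have hmem : g ∈ vGge v hv γ :=
      hc γ g 0 h (by simp [SetLike.mem_coe, mem_vGge, gv_zero hv]) (SetLike.mem_coe.mpr (mem_vGge.mpr hγ.le)) h0g hgh
    rw [← hγ]; exact hmem

lemma vc_of_convGlt (hv : IsGroupVal v) (hq : IsCompatQO q)
    (hc : ∀ γ : Γ, QOConvex q ((vGlt v hv γ : AddSubgroup G) : Set G)) :
    ValCompat v q := by
  intro g h h0g hgh
  by_contra hcon
  push_neg at hcon
  have hgne : v g ≠ ⊤ := fun h' => absurd (h' ▸ hcon) (by simp)
  obtain ⟨δ, hδ⟩ := WithTop.ne_top_iff_exists.mp hgne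
  have hmem : g ∈ vGlt v hv δ :=
    hc δ g 0 h (by simp [SetLike.mem_coe, mem_vGlt, gv_zero hv])
      (SetLike.mem_coe.mpr (mem_vGlt.mpr (hδ ▸ hcon))) h0g hgh
  simp only [SetLike.mem_coe, mem_vGlt, hδ] at hmem
  exact lt_irrefl _ hmem

lemma convGge_of_vc (hv : IsGroupVal v) (hq : IsCompatQO q) (hvc : ValCompat v q)
    (γ : Γ) : QOConvex q ((vGge v hv γ : AddSubgroup G) : Set G) := by
  intro a b c hb hc hba hac
  simp only [SetLike.mem_coe, mem_vGge] at hb hc ⊢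
  by_cases h0 : q 0 a
  · exact hc.trans (hvc a c h0 hac)
  · obtain ⟨ha0, hane, hnega, _⟩ := co_sneg hq h0
    have hF5 : q (-a) (-b) := co_neg_antitone hq hba h0
    have := hvc (-a) (-b) hnega hF5
    rw [gv_neg hv, gv_neg hv] at this
    exact hb.trans this

lemma convGlt_of_vc (hv : IsGroupVal v) (hq : IsCompatQO q) (hvc : ValCompat v q)
    (γ : Γ) : QOConvex q ((vGlt v hv γ : AddSubgroup G) : Set G) := by
  intro a b c hb hc hba hac
  simp only [SetLike.mem_coe, mem_vGlt] at hb hc ⊢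
  by_cases h0 : q 0 a
  · exact hc.trans_le (hvc a c h0 hac)
  · obtain ⟨ha0, hane, hnega, _⟩ := co_sneg hq h0
    have hF5 : q (-a) (-b) := co_neg_antitone hq hba h0
    have := hvc (-a) (-b) hnega hF5
    rw [gv_neg hv, gv_neg hv] at this
    exact hb.trans_le this

end Convex
section QuotBasic
variable {G : Type*} [AddCommGroup G] {Γ : Type*} [LinearOrder Γ]
  {v : G → WithTop Γ} {q : G → G → Prop}

lemma vMk_eq_iff (hv : IsGroupVal v) (γ : Γ) {a b : G} (ha : a ∈ vGge v hv γ)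
    (hb : b ∈ vGge v hv γ) :
    vMk v hv γ a ha = vMk v hv γ b hb ↔ (γ : WithTop Γ) < v (b - a) := by
  rw [vMk, vMk, QuotientAddGroup.eq, AddSubgroup.mem_addSubgroupOf]
  show (-a + b) ∈ vGlt v hv γ ↔ _
  rw [mem_vGlt, neg_add_eq_sub]

lemma vMk_surj (hv : IsGroupVal v) (γ : Γ) (x : vQuot v hv γ) :
    ∃ (a : G) (ha : a ∈ vGge v hv γ), vMk v hv γ a ha = x := by
  obtain ⟨⟨a, ha⟩, rfl⟩ := QuotientAddGroup.mk_surjective x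
  exact ⟨a, ha, rfl⟩

lemma vMk_zero (hv : IsGroupVal v) (γ : Γ) :
    vMk v hv γ 0 (vGge v hv γ).zero_mem = 0 := rfl

lemma vMk_add (hv : IsGroupVal v) (γ : Γ) {a b : G} (ha : a ∈ vGge v hv γ)
    (hb : b ∈ vGge v hv γ) :
    vMk v hv γ (a + b) (add_mem ha hb) = vMk v hv γ a ha + vMk v hv γ b hb := rfl

lemma vMk_neg (hv : IsGroupVal v) (γ : Γ) {a : G} (ha : a ∈ vGge v hv γ) :
    vMk v hv γ (-a) (neg_mem ha) = -(vMk v hv γ a ha) := rfl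

lemma vInd_intro (hv : IsGroupVal v) (γ : Γ) {a b : G} (ha : a ∈ vGge v hv γ)
    (hb : b ∈ vGge v hv γ) (h : q a b) :
    vInd v hv q γ (vMk v hv γ a ha) (vMk v hv γ b hb) :=
  ⟨a, b, ha, hb, rfl, rfl, h⟩

end QuotBasic
section QuotKey
variable {G : Type*} [AddCommGroup G] {Γ : Type*} [LinearOrder Γ]
  {v : G → WithTop Γ} {q : G → G → Prop}

lemma vInd_refl (hv : IsGroupVal v) (hq : IsCompatQO q) (γ : Γ) :
    Reflexive (vInd v hv q γ) := by
  intro x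
  obtain ⟨a, ha, rfl⟩ := vMk_surj hv γ x
  exact vInd_intro hv γ ha ha (co_refl hq a)

lemma vInd_total (hv : IsGroupVal v) (hq : IsCompatQO q) (γ : Γ) (x y : vQuot v hv γ) :
    vInd v hv q γ x y ∨ vInd v hv q γ y x := by
  obtain ⟨a, ha, rfl⟩ := vMk_surj hv γ x
  obtain ⟨b, hb, rfl⟩ := vMk_surj hv γ y
  rcases co_total hq a b with h | h
  · exact Or.inl (vInd_intro hv γ ha hb h)
  · exact Or.inr (vInd_intro hv γ hb ha h)

/-- If `b ∼ d` with `d` of value `> γ`, then `v b > γ`. -/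
lemma equiv_big (hv : IsGroupVal v) (hq : IsCompatQO q) (hvc : ValCompat v q)
    {b d : G} (hbd : q b d) (hdb : q d b) (hd : (γ : Γ) → True) {γ : Γ}
    (hdγ : (γ : WithTop Γ) < v d) : (γ : WithTop Γ) < v b := by
  by_cases h0 : q 0 d
  · have h0b : q 0 b := co_trans hq h0 hdb
    exact hdγ.trans_le (hvc b d h0b hbd)
  · have h0b : ¬ q 0 b := fun h => h0 (co_trans hq h hbd)
    obtain ⟨hb0, hbne, hnegb, _⟩ := co_sneg hq h0b
    have hF5 : q (-b) (-d) := co_neg_antitone hq hdb h0b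
    have := hvc (-b) (-d) hnegb hF5
    rw [gv_neg hv, gv_neg hv] at this
    exact hdγ.trans_le this

lemma vInd_trans (hv : IsGroupVal v) (hq : IsCompatQO q) (hvc : ValCompat v q) (γ : Γ) :
    Transitive (vInd v hv q γ) := by
  rintro x y z ⟨a, b, ha, hb, hxa, hyb, hab⟩ ⟨b', c, hb', hc, hyb', hzc, hbc⟩
  have hbb' : vMk v hv γ b hb = vMk v hv γ b' hb' := hyb.trans hyb'.symm
  rw [vMk_eq_iff] at hbb'
  set d := b' - b with hdd
  have hd' : b' = b + d := by simp [hdd]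
  have hdge : d ∈ vGge v hv γ := le_of_lt hbb'
  by_cases hbd : QOEquiv q b d
  · -- b ∼ d, so v b > γ
    have hvb : (γ : WithTop Γ) < v b := equiv_big hv hq hvc hbd.1 hbd.2 (fun _ => trivial) hbb'
    by_cases hcd : QOEquiv q c (-d)
    · -- v c > γ, so z = y and we are done
      have hvc' : (γ : WithTop Γ) < v c := by
        have := equiv_big hv hq hvc hcd.1 hcd.2 (fun _ => trivial) (γ := γ) (by rwa [gv_neg hv])
        exact this
      have hzy : vMk v hv γ c hc = vMk v hv γ b hb := by
        rw [vMk_eq_iff]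
        exact lt_of_lt_of_le (lt_min hvb hvc') (gv_sub hv b c)
      rw [← hzc, hzy, hyb]
      exact ⟨a, b, ha, hb, hxa, hyb, hab⟩
    · -- move c by -d
      have h2 := co_q2 hq (-d) hbc hcd
      rw [show b' + -d = b from by simp [hdd]] at h2
      have hcd_ge : c - d ∈ vGge v hv γ := by
        have := gv_add hv c (-d)
        rw [← sub_eq_add_neg] at this
        exact le_trans (le_min hc (by rw [gv_neg hv]; exact hdge)) this
      refine ⟨a, c - d, ha, hcd_ge, hxa, ?_, co_trans hq hab (by rwa [sub_eq_add_neg])⟩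
      rw [← hzc, vMk_eq_iff]
      rw [show c - (c - d) = d from by abel]
      exact hbb'
  · -- move a by d
    have h2 := co_q2 hq d hab hbd
    rw [← hd'] at h2
    have had_ge : a + d ∈ vGge v hv γ :=
      le_trans (le_min ha hdge) (gv_add hv a d)
    refine ⟨a + d, c, had_ge, hc, ?_, hzc, co_trans hq h2 hbc⟩
    rw [← hxa, vMk_eq_iff]
    rw [show a - (a + d) = -d from by abel, gv_neg hv]
    exact hbb'

lemma vInd_q1 (hv : IsGroupVal v) (hq : IsCompatQO q) (hvc : ValCompat v q) (γ : Γ)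
    (x : vQuot v hv γ) (hx : QOEquiv (vInd v hv q γ) x 0) : x = 0 := by
  obtain ⟨⟨a, b, ha, hb, hxa, h0b, hab⟩, ⟨s, t, hs, ht, h0s, hxt, hst⟩⟩ := hx
  rw [← vMk_zero hv γ, vMk_eq_iff] at h0b h0s
  rw [zero_sub, gv_neg hv] at h0b h0s
  have hat : vMk v hv γ t ht = vMk v hv γ a ha := hxt.trans hxa.symm
  rw [vMk_eq_iff] at hat
  -- goal : x = 0, suffices γ < v a
  suffices hva : (γ : WithTop Γ) < v a by
    rw [← hxa, ← vMk_zero hv γ, vMk_eq_iff, zero_sub, gv_neg hv]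
    exact hva
  by_contra hna
  have hva : v a = (γ : WithTop Γ) := le_antisymm (not_lt.mp hna) ha
  by_cases h0a : q 0 a
  · exact absurd (hvc a b h0a hab) (not_le.mpr (hva ▸ h0b))
  · by_cases h0t : q 0 t
    · exact lemS hq hv hvc h0a h0t (by rw [hva, gv_sub_comm hv]; exact hat)
    · obtain ⟨ht0, htne, hnegt, _⟩ := co_sneg hq h0t
      have hF5 : q (-t) (-s) := co_neg_antitone hq hst h0t
      have h1 := hvc (-t) (-s) hnegt hF5
      rw [gv_neg hv, gv_neg hv] at h1
      have hvt : (γ : WithTop Γ) < v t := lt_of_lt_of_le h0s h1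
      have : (γ : WithTop Γ) < v a := by
        have := gv_add hv t (a - t)
        rw [show t + (a - t) = a from by abel] at this
        exact lt_of_lt_of_le (lt_min hvt hat) this
      exact hna this

lemma vInd_q2 (hv : IsGroupVal v) (hq : IsCompatQO q) (γ : Γ)
    (x y z : vQuot v hv γ) (hxy : vInd v hv q γ x y)
    (hyz : ¬ QOEquiv (vInd v hv q γ) y z) :
    vInd v hv q γ (x + z) (y + z) := by
  obtain ⟨a, b, ha, hb, hxa, hyb, hab⟩ := hxy
  obtain ⟨e, he, hze⟩ := vMk_surj hv γ z
  have hbe : ¬ QOEquiv q b e := by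
    rintro ⟨h1, h2⟩
    exact hyz ⟨hyb ▸ hze ▸ vInd_intro hv γ hb he h1, hze ▸ hyb ▸ vInd_intro hv γ he hb h2⟩
  have h2 := co_q2 hq e hab hbe
  have := vInd_intro hv γ (add_mem ha he) (add_mem hb he) h2
  rwa [vMk_add hv γ ha he, vMk_add hv γ hb he, hxa, hyb, hze] at this

lemma vInd_compat (hv : IsGroupVal v) (hq : IsCompatQO q) (hvc : ValCompat v q) (γ : Γ) :
    IsCompatQO (vInd v hv q γ) :=
  ⟨⟨vInd_refl hv hq γ, vInd_trans hv hq hvc γ, vInd_total hv hq γ⟩,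
    fun x hx => vInd_q1 hv hq hvc γ x hx, fun x y z h1 h2 => vInd_q2 hv hq γ x y z h1 h2⟩

/-- (Q1) on every quotient implies `ValCompat`. -/
lemma vc_of_quotQ1 (hv : IsGroupVal v) (hq : IsCompatQO q)
    (hQ : ∀ γ : Γ, ∀ x : vQuot v hv γ, QOEquiv (vInd v hv q γ) x 0 → x = 0) :
    ValCompat v q := by
  intro g h h0g hgh
  by_contra hcon
  push_neg at hcon
  have hgne : v g ≠ ⊤ := fun h' => absurd (h' ▸ hcon) (by simp)
  obtain ⟨γ, hγ⟩ := WithTop.ne_top_iff_exists.mp hgne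
  have hgge : g ∈ vGge v hv γ := hγ.le
  have hhge : h ∈ vGge v hv γ := (show (γ:WithTop Γ) < v h by rw [hγ]; exact hcon).le
  have h1 : vInd v hv q γ 0 (vMk v hv γ g hgge) := by
    rw [← vMk_zero hv γ]
    exact vInd_intro hv γ _ hgge h0g
  have h2 : vInd v hv q γ (vMk v hv γ g hgge) 0 := by
    have hmk : vMk v hv γ h hhge = 0 := by
      rw [← vMk_zero hv γ, vMk_eq_iff, zero_sub, gv_neg hv, hγ]
      exact hcon
    exact hmk ▸ vInd_intro hv γ hgge hhge hgh
  have := hQ γ _ ⟨h2, h1⟩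
  rw [← vMk_zero hv γ, vMk_eq_iff, zero_sub, gv_neg hv, ← hγ] at this
  exact lt_irrefl _ this

end QuotKey
section LemmaV
universe u
variable {H : Type u} [AddCommGroup H]

/-- All elements are v-type when `0` is a minimum. -/
lemma zmin_vtype {p : H → H → Prop} (hp : IsCompatQO p) (h0 : ∀ g, p 0 g) (g : H) :
    p g (-g) := by
  by_contra hgg
  have h1 : p (-g) g := (co_total hp g (-g)).resolve_left hgg
  have h2 : ¬ QOEquiv p g (-g) := fun h => hgg h.1
  have h3 := co_q2 hp (-g) h1 h2
  rw [add_neg_cancel] at h3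
  have h5 : -g + -g = 0 := co_q1 hp h3 (h0 _)
  have h6 : g = -g := by
    have : g + g = 0 := by
      have := congrArg Neg.neg h5
      simpa using this
    exact (eq_neg_of_add_eq_zero_left this)
  exact hgg (h6 ▸ co_refl hp g)

/-- Ultrametric inequality when `0` is a minimum. -/
lemma zmin_um {p : H → H → Prop} (hp : IsCompatQO p) (h0 : ∀ g, p 0 g) {x y : H}
    (hxy : p x y) : p (x + y) y := by
  by_cases hc : QOEquiv p (-x) (x + y)
  · have h2 : p (-x) x := by
      have := zmin_vtype hp h0 (-x)
      rwa [neg_neg] at this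
    exact co_trans hp (co_trans hp hc.2 h2) hxy
  · have := co_q2 hp (x + y) (h0 (-x)) hc
    rw [zero_add, neg_add_cancel_left] at this
    exact this

def QOSetoid (p : H → H → Prop) (hp : IsCompatQO p) : Setoid H :=
  ⟨QOEquiv p, ⟨fun a => ⟨co_refl hp a, co_refl hp a⟩, fun h => ⟨h.2, h.1⟩,
    fun h1 h2 => ⟨co_trans hp h1.1 h2.1, co_trans hp h2.2 h1.2⟩⟩⟩

abbrev QOGamma (p : H → H → Prop) (hp : IsCompatQO p) : Type u := Quotient (QOSetoid p hp)

def QOle (p : H → H → Prop) (hp : IsCompatQO p) : QOGamma p hp → QOGamma p hp → Prop :=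
  Quotient.lift₂ (fun a b => p b a) (by
    rintro a b a' b' ⟨ha1, ha2⟩ ⟨hb1, hb2⟩
    apply propext
    exact ⟨fun h => co_trans hp (co_trans hp hb2 h) ha1,
      fun h => co_trans hp (co_trans hp hb1 h) ha2⟩)

noncomputable def QOLO (p : H → H → Prop) (hp : IsCompatQO p) :
    LinearOrder (QOGamma p hp) where
  le := QOle p hp
  le_refl x := by
    induction x using Quotient.ind
    exact co_refl hp _
  le_trans x y z := by
    induction x using Quotient.ind
    induction y using Quotient.ind
    induction z using Quotient.ind
    exact fun h1 h2 => co_trans hp h2 h1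
  le_antisymm x y := by
    induction x using Quotient.ind
    induction y using Quotient.ind
    exact fun h1 h2 => Quotient.sound ⟨h2, h1⟩
  le_total x y := by
    induction x using Quotient.ind
    induction y using Quotient.ind
    exact (co_total hp _ _).symm
  toDecidableLE := fun a b => Classical.dec _

theorem valuational_of_zero_min {p : H → H → Prop} (hp : IsCompatQO p)
    (h0 : ∀ g, p 0 g) : IsValuational p := by
  classical
  letI lo : LinearOrder (QOGamma p hp) := QOLO p hp
  set mk : H → QOGamma p hp := fun g => Quotient.mk (QOSetoid p hp) g with hmk
  set V : H → WithTop (QOGamma p hp) :=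
    fun g => if g = 0 then ⊤ else ((mk g : QOGamma p hp) : WithTop (QOGamma p hp)) with hV
  have hle : ∀ a b : H, (mk a ≤ mk b) ↔ p b a := fun a b => Iff.rfl
  have hvt : ∀ g : H, QOEquiv p g (-g) := fun g =>
    ⟨zmin_vtype hp h0 g, by have := zmin_vtype hp h0 (-g); rwa [neg_neg] at this⟩
  refine ⟨@ValuationOn.mk _ _ (QOGamma p hp) lo V ?_ ?_, ?_⟩
  · intro g
    constructor
    · intro hg
      by_contra hne
      rw [hV] at hg
      simp only [if_neg hne] at hg
      exact WithTop.coe_ne_top hg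
    · rintro rfl; simp [hV]
  · intro g h
    rcases eq_or_ne (g - h) 0 with hgh | hgh
    · have : V (g - h) = ⊤ := by simp [hV, hgh]
      rw [this]; exact le_top
    rcases eq_or_ne h 0 with rfl | hh
    · rw [sub_zero]; exact min_le_left _ _
    rcases eq_or_ne g 0 with rfl | hg
    · have h1 : V 0 = ⊤ := by simp [hV]
      have h2 : V h = ((mk h : QOGamma p hp) : WithTop (QOGamma p hp)) := by simp [hV, hh]
      have h3 : V (0 - h) = ((mk (-h) : QOGamma p hp) : WithTop (QOGamma p hp)) := by
        simp only [hV, zero_sub]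
        rw [if_neg (by simpa using hh)]
      rw [h1, h2, h3]
      refine le_trans (min_le_right _ _) ?_
      rw [WithTop.coe_le_coe, hle]
      exact (hvt h).2
    · have h2 : V h = ((mk h : QOGamma p hp) : WithTop (QOGamma p hp)) := by simp [hV, hh]
      have h1 : V g = ((mk g : QOGamma p hp) : WithTop (QOGamma p hp)) := by simp [hV, hg]
      have h3 : V (g - h) = ((mk (g - h) : QOGamma p hp) : WithTop (QOGamma p hp)) := by
        simp [hV, hgh]
      rw [h1, h2, h3]
      rcases co_total hp g h with hc | hc
      · refine le_trans (min_le_right _ _) ?_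
        rw [WithTop.coe_le_coe, hle]
        have h4 : p g (-h) := co_trans hp hc (hvt h).1
        have h5 := zmin_um hp h0 h4
        rw [← sub_eq_add_neg] at h5
        exact co_trans hp h5 (hvt h).2
      · refine le_trans (min_le_left _ _) ?_
        rw [WithTop.coe_le_coe, hle]
        have h4 : p (-h) g := co_trans hp (hvt h).2 hc
        have h5 := zmin_um hp h0 h4
        rw [neg_add_eq_sub] at h5
        exact h5
  · intro g h
    show p g h ↔ V h ≤ V g
    rcases eq_or_ne h 0 with rfl | hh
    · have h1 : V 0 = ⊤ := by simp [hV]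
      rw [h1]
      constructor
      · intro hg0
        have : g = 0 := co_q1 hp hg0 (h0 g)
        simp [hV, this]
      · intro htop
        have h2 : V g = ⊤ := le_antisymm le_top htop
        rw [hV] at h2
        simp only at h2
        split at h2
        · next hg => exact hg ▸ co_refl hp 0
        · exact absurd h2 (WithTop.coe_ne_top)
    rcases eq_or_ne g 0 with rfl | hg
    · have h1 : V 0 = ⊤ := by simp [hV]
      rw [h1]
      exact ⟨fun _ => le_top, fun _ => h0 h⟩
    · have h2 : V h = ((mk h : QOGamma p hp) : WithTop (QOGamma p hp)) := by simp [hV, hh]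
      have h1 : V g = ((mk g : QOGamma p hp) : WithTop (QOGamma p hp)) := by simp [hV, hg]
      rw [h1, h2, WithTop.coe_le_coe, hle]

lemma zero_min_of_valuational {p : H → H → Prop} (hval : IsValuational p) :
    ∀ g, p 0 g := by
  obtain ⟨V, hV⟩ := hval
  intro g
  rw [hV, (V.top_iff 0).mpr rfl]
  exact le_top

end LemmaV
section D1
variable {G : Type*} [AddCommGroup G] {Γ : Type*} [LinearOrder Γ]
  {v : G → WithTop Γ} {q : G → G → Prop}

lemma quot_zmin_of_zmin (hv : IsGroupVal v) (h0 : ∀ g, q 0 g) (γ : Γ)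
    (x : vQuot v hv γ) : vInd v hv q γ 0 x := by
  obtain ⟨b, hb, rfl⟩ := vMk_surj hv γ x
  rw [← vMk_zero hv γ]
  exact vInd_intro hv γ _ hb (h0 b)

lemma zmin_of_quot_zmin (hv : IsGroupVal v) (hq : IsCompatQO q) (hvc : ValCompat v q)
    (h0 : ∀ (γ : Γ) (x : vQuot v hv γ), vInd v hv q γ 0 x) : ∀ g, q 0 g := by
  intro g
  by_contra hg
  obtain ⟨hg0, hgne, _, _⟩ := co_sneg hq hg
  obtain ⟨γ, hγ⟩ := WithTop.ne_top_iff_exists.mp ((hv.1 g).not.mpr hgne)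
  have hgge : g ∈ vGge v hv γ := hγ.le
  obtain ⟨s, t, hs, ht, h0s, hXt, hst⟩ := h0 γ (vMk v hv γ g hgge)
  rw [← vMk_zero hv γ, vMk_eq_iff, zero_sub, gv_neg hv] at h0s
  rw [vMk_eq_iff] at hXt
  -- hXt : γ < v (g - t)
  by_cases h0t : q 0 t
  · exact lemS hq hv hvc hg h0t (by rw [← hγ, gv_sub_comm hv]; exact hXt)
  · obtain ⟨ht0, htne, hnegt, _⟩ := co_sneg hq h0t
    have hF5 : q (-t) (-s) := co_neg_antitone hq hst h0t
    have h1 := hvc (-t) (-s) hnegt hF5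
    rw [gv_neg hv, gv_neg hv] at h1
    have hvt : (γ : WithTop Γ) < v t := lt_of_lt_of_le h0s h1
    have hvg : (γ : WithTop Γ) < v g := by
      have := gv_add hv t (g - t)
      rw [show t + (g - t) = g from by abel] at this
      exact lt_of_lt_of_le (lt_min hvt hXt) this
    rw [← hγ] at hvg
    exact lt_irrefl _ hvg

lemma d1_iff (hv : IsGroupVal v) (hq : IsCompatQO q) (hvc : ValCompat v q) :
    IsValuational q ↔ ∀ γ : Γ, IsValuational (vInd v hv q γ) := by
  constructor
  · intro hval γ
    exact valuational_of_zero_min (vInd_compat hv hq hvc γ)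
      (quot_zmin_of_zmin hv (zero_min_of_valuational hval) γ)
  · intro hval
    refine valuational_of_zero_min hq (zmin_of_quot_zmin hv hq hvc ?_)
    intro γ x
    exact zero_min_of_valuational (hval γ) x

end D1
section D2
variable {G : Type*} [AddCommGroup G] {Γ : Type*} [LinearOrder Γ]
  {v : G → WithTop Γ} {q : G → G → Prop}

lemma ot_antisymm (hq : IsCompatQO q) (hot : ∀ g : G, g ≠ 0 → ¬ QOEquiv q g (-g))
    {a b : G} (h1 : q a b) (h2 : q b a) : a = b := by
  rcases eq_or_ne b 0 with rfl | hb
  · exact co_q1 hq h1 h2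
  · have s1 : ¬ QOEquiv q b (-b) := hot b hb
    have s2 : ¬ QOEquiv q a (-b) := by
      rintro ⟨p1, p2⟩
      exact s1 ⟨co_trans hq h2 p1, co_trans hq p2 h1⟩
    have e1 := co_q2 hq (-b) h1 s1
    rw [add_neg_cancel] at e1
    have e2 := co_q2 hq (-b) h2 s2
    rw [add_neg_cancel] at e2
    have : a + -b = 0 := co_q1 hq e1 e2
    rw [add_neg_eq_zero] at this
    exact this

lemma ot_neg_neg (hq : IsCompatQO q) (hot : ∀ g : G, g ≠ 0 → ¬ QOEquiv q g (-g))
    {w : G} (h : q 0 w) (hne : w ≠ 0) : q (-w) 0 ∧ ¬ q 0 (-w) := by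
  have e1 := co_q2 hq (-w) h (hot w hne)
  rw [zero_add, add_neg_cancel] at e1
  refine ⟨e1, fun hcon => ?_⟩
  have : -w = 0 := co_q1 hq e1 hcon
  exact hne (by simpa using this)

lemma ot_pos_add (hq : IsCompatQO q) (hot : ∀ g : G, g ≠ 0 → ¬ QOEquiv q g (-g))
    {u w : G} (hu : q 0 u) (hune : u ≠ 0) (hw : q 0 w) (hwne : w ≠ 0) :
    q 0 (u + w) ∧ u + w ≠ 0 := by
  obtain ⟨nw0, nw1⟩ := ot_neg_neg hq hot hw hwne
  constructor
  · by_contra hcon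
    have h1 : q (u + w) 0 := (co_total hq (u + w) 0).resolve_right hcon
    have h2 : ¬ QOEquiv q 0 (-w) := fun hp => nw1 hp.1
    have h3 := co_q2 hq (-w) h1 h2
    rw [zero_add, add_assoc, add_neg_cancel, add_zero] at h3
    have h4 : q u 0 := co_trans hq h3 nw0
    exact hune (co_q1 hq h4 hu)
  · intro hcon
    have : w = -u := eq_neg_of_add_eq_zero_right hcon
    rw [this] at hw
    exact (ot_neg_neg hq hot hu hune).2 hw

lemma ot_translation (hq : IsCompatQO q) (hot : ∀ g : G, g ≠ 0 → ¬ QOEquiv q g (-g))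
    (x y z : G) (hxy : q x y) : q (x + z) (y + z) := by
  by_cases hyz : QOEquiv q y z
  · obtain rfl : y = z := ot_antisymm hq hot hyz.1 hyz.2
    rcases eq_or_ne x y with rfl | hxyne
    · exact co_refl hq _
    have hnyx : ¬ q y x := fun h => hxyne (ot_antisymm hq hot hxy h)
    rcases eq_or_ne y 0 with rfl | hy0
    · simpa using hxy
    by_contra hgoal
    have hyyxy : q (y + y) (x + y) := (co_total hq (y + y) (x + y)).resolve_right hgoal
    by_cases hc : QOEquiv q (x + y) (-y)
    · have hxy_eq : x + y = -y := ot_antisymm hq hot hc.1 hc.2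
      have hx : x = -y + -y := by
        rw [← sub_eq_add_neg]
        exact eq_sub_of_add_eq hxy_eq
      have e1 : q (y + y + y) 0 := by
        have h5 : q (y + y) (-y) := hxy_eq ▸ hyyxy
        have h6 : ¬ QOEquiv q (-y) y := fun hp => hot y hy0 ⟨hp.2, hp.1⟩
        have := co_q2 hq y h5 h6
        rwa [neg_add_cancel] at this
      have e2 : q 0 (y + y + y) := by
        have h7 : ¬ QOEquiv q y (y + y) := by
          rintro ⟨p1, p2⟩
          have hy2 : y = y + y := ot_antisymm hq hot p1 p2
          exact hy0 (by simpa using hy2.symm)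
        have hx' : q (-y + -y) y := hx ▸ hxy
        have h8 := co_q2 hq (y + y) hx' h7
        rw [show -y + -y + (y + y) = 0 from by abel, show y + (y + y) = y + y + y from by abel] at h8
        exact h8
      have e3 : y + y + y = 0 := co_q1 hq e1 e2
      rcases co_total hq 0 y with hy | hy
      · have p2 := ot_pos_add hq hot hy hy0 hy hy0
        have p3 := ot_pos_add hq hot p2.1 p2.2 hy hy0
        exact p3.2 e3
      · have hny : ¬ q 0 y := fun h => hy0 (co_q1 hq hy h)
        obtain ⟨_, _, hpos, _⟩ := co_sneg hq hny
        have hyne' : (-y : G) ≠ 0 := by simpa using hy0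
        have p2 := ot_pos_add hq hot hpos hyne' hpos hyne'
        have p3 := ot_pos_add hq hot p2.1 p2.2 hpos hyne'
        refine p3.2 ?_
        rw [show -y + -y + -y = -(y + y + y) from by abel, e3, neg_zero]
    · have := co_q2 hq (-y) hyyxy hc
      rw [add_assoc, add_neg_cancel, add_zero, add_assoc, add_neg_cancel, add_zero] at this
      exact hnyx this
  · exact co_q2 hq z hxy hyz

lemma ot_groupOrder (hq : IsCompatQO q) (hot : ∀ g : G, g ≠ 0 → ¬ QOEquiv q g (-g)) :
    IsGroupOrder q :=
  ⟨hq.1, fun _ _ h1 h2 => ot_antisymm hq hot h1 h2, fun x y z h => ot_translation hq hot x y z h⟩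

lemma no_vtype_of_quotGO (hv : IsGroupVal v) (hq : IsCompatQO q)
    (hGO : ∀ γ : Γ, IsGroupOrder (vInd v hv q γ)) (g : G) (hgne : g ≠ 0) :
    ¬ QOEquiv q g (-g) := by
  rintro ⟨hv1, hv2⟩
  obtain ⟨γ, hγ⟩ := WithTop.ne_top_iff_exists.mp ((hv.1 g).not.mpr hgne)
  have hgge : g ∈ vGge v hv γ := hγ.le
  set X := vMk v hv γ g hgge with hX
  have h1 : vInd v hv q γ X (-X) := by
    rw [hX, ← vMk_neg hv γ hgge]
    exact vInd_intro hv γ hgge (neg_mem hgge) hv1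
  have h2 : vInd v hv q γ (-X) X := by
    rw [hX, ← vMk_neg hv γ hgge]
    exact vInd_intro hv γ (neg_mem hgge) hgge hv2
  have hXeq : X = -X := (hGO γ).2.1 _ _ h1 h2
  have h2X : X + X = 0 := by nth_rewrite 2 [hXeq]; rw [add_neg_cancel]
  have hX0 : X = 0 := by
    rcases (hGO γ).1.2.2 X 0 with hc | hc
    · have := (hGO γ).2.2 X 0 X hc
      rw [h2X, zero_add] at this
      exact (hGO γ).2.1 _ _ hc this
    · have := (hGO γ).2.2 0 X X hc
      rw [h2X, zero_add] at this
      exact (hGO γ).2.1 _ _ this hc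
  rw [hX, ← vMk_zero hv γ, vMk_eq_iff, zero_sub, gv_neg hv, ← hγ] at hX0
  exact lt_irrefl _ hX0

lemma quotGO_of_GO (hv : IsGroupVal v) (hq : IsCompatQO q) (hvc : ValCompat v q)
    (hGO : IsGroupOrder q) (γ : Γ) : IsGroupOrder (vInd v hv q γ) := by
  refine ⟨⟨vInd_refl hv hq γ, vInd_trans hv hq hvc γ, vInd_total hv hq γ⟩, ?_, ?_⟩
  · rintro x y ⟨a, b, ha, hb, hxa, hyb, hab⟩ ⟨b', a', hb', ha', hyb', hxa', hba⟩
    have hdb : (γ : WithTop Γ) < v (b' - b) := by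
      rw [← vMk_eq_iff hv γ hb hb']; exact hyb.trans hyb'.symm
    have hda : (γ : WithTop Γ) < v (a' - a) := by
      rw [← vMk_eq_iff hv γ ha ha']; exact hxa.trans hxa'.symm
    set d := (a' - a) - (b' - b) with hd
    have hdlt : (γ : WithTop Γ) < v d := lt_of_lt_of_le (lt_min hda hdb) (gv_sub hv _ _)
    -- q b (a + d)
    have t1 : q (b' + (-b' + b)) (a' + (-b' + b)) := hGO.2.2 _ _ _ hba
    rw [add_neg_cancel_left, show a' + (-b' + b) = a + d from by rw [hd]; abel] at t1
    -- 0 ≾ b - a ≾ d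
    have t2 : q 0 (b - a) := by
      have := hGO.2.2 _ _ (-a) hab
      rwa [add_neg_cancel, ← sub_eq_add_neg] at this
    have t3 : q (b - a) d := by
      have := hGO.2.2 _ _ (-a) t1
      rwa [← sub_eq_add_neg, show a + d + -a = d from by abel] at this
    have t4 : v d ≤ v (b - a) := hvc _ _ t2 t3
    have : (γ : WithTop Γ) < v (b - a) := lt_of_lt_of_le hdlt t4
    rw [← hxa, ← hyb, vMk_eq_iff]
    exact this
  · rintro x y z ⟨a, b, ha, hb, hxa, hyb, hab⟩
    obtain ⟨e, he, hze⟩ := vMk_surj hv γ z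
    have h2 := hGO.2.2 _ _ e hab
    have := vInd_intro hv γ (add_mem ha he) (add_mem hb he) h2
    rwa [vMk_add hv γ ha he, vMk_add hv γ hb he, hxa, hyb, hze] at this

lemma d2_iff (hv : IsGroupVal v) (hq : IsCompatQO q) (hvc : ValCompat v q) :
    IsGroupOrder q ↔ ∀ γ : Γ, IsGroupOrder (vInd v hv q γ) := by
  constructor
  · exact fun hGO γ => quotGO_of_GO hv hq hvc hGO γ
  · intro hGO
    exact ot_groupOrder hq (no_vtype_of_quotGO hv hq hGO)

end D2
theorem stmt8 {G : Type u} [AddCommGroup G] {Γ : Type*} [LinearOrder Γ]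
    (v : G → WithTop Γ) (hv : IsGroupVal v) (q : G → G → Prop)
    (hq : IsCompatQO q) :
    ((∀ γ : Γ, QOConvex q ((vGge v hv γ : AddSubgroup G) : Set G)) ↔
        (∀ γ : Γ, QOConvex q ((vGlt v hv γ : AddSubgroup G) : Set G))) ∧
    ((∀ γ : Γ, QOConvex q ((vGge v hv γ : AddSubgroup G) : Set G)) ↔
        (∀ γ : Γ, Transitive (vInd v hv q γ) ∧ IsCompatQO (vInd v hv q γ))) ∧
    ((∀ γ : Γ, QOConvex q ((vGge v hv γ : AddSubgroup G) : Set G)) ↔ ValCompat v q) ∧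
    (ValCompat v q →
      ((IsValuational q ↔ ∀ γ : Γ, IsValuational (vInd v hv q γ)) ∧
        (IsGroupOrder q ↔ ∀ γ : Γ, IsGroupOrder (vInd v hv q γ)))) := by
  have hCge : (∀ γ : Γ, QOConvex q ((vGge v hv γ : AddSubgroup G) : Set G)) ↔ ValCompat v q :=
    ⟨vc_of_convGge hv hq, fun hvc γ => convGge_of_vc hv hq hvc γ⟩
  have hClt : (∀ γ : Γ, QOConvex q ((vGlt v hv γ : AddSubgroup G) : Set G)) ↔ ValCompat v q :=
    ⟨vc_of_convGlt hv hq, fun hvc γ => convGlt_of_vc hv hq hvc γ⟩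
  refine ⟨hCge.trans hClt.symm, ?_, hCge, ?_⟩
  · constructor
    · intro hc γ
      have hvc := hCge.mp hc
      exact ⟨vInd_trans hv hq hvc γ, vInd_compat hv hq hvc γ⟩
    · intro hQ
      exact hCge.mpr (vc_of_quotQ1 hv hq (fun γ x hx => (hQ γ).2.2.1 x hx))
  · intro hvc
    exact ⟨d1_iff hv hq hvc, d2_iff hv hq hvc⟩
end

section
/- Every valuational quasi-order on an abelian group G is a C-quasi-order: if v is a valuation on G, then there exists a compatible C-relation C on G such that v(g) ≥ v(h) ⇔ ¬C(g, h, 0) for all g, h ∈ G. -/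
theorem stmt9 {G : Type u} [AddCommGroup G] {Γ : Type*} [LinearOrder Γ]
    (v : G → WithTop Γ) (hv : IsGroupVal v) :
    ∃ C : G → G → G → Prop, IsCRel C ∧ ∀ g h : G, (v h ≤ v g ↔ ¬ C g h 0) := by
  have vneg : ∀ a : G, v (-a) = v a := fun a =>
    le_antisymm (by simpa using hv.le_neg (-a)) (hv.le_neg a)
  refine ⟨fun x y z => v (x - z) < v (y - z), ⟨?_, ?_, ?_, ?_, ?_⟩, ?_⟩
  · intro x y z h
    have hm : min (v (x - y)) (v (z - y)) ≤ v (x - z) := by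
      simpa [sub_sub_sub_cancel_right] using hv.2 (x - y) (z - y)
    rw [← neg_sub z y, vneg] at h
    rcases min_lt_iff.mp (lt_of_le_of_lt hm h) with h' | h'
    · exact h'
    · exact absurd h' (lt_irrefl _)
  · intro x y z h; exact not_lt.mpr h.le
  · intro w x y z h
    rcases lt_or_ge (v (w - z)) (v (y - z)) with h' | h'
    · exact Or.inl h'
    · exact Or.inr (lt_of_lt_of_le h h')
  · intro x y h
    have : v (x - y) ≠ ⊤ := fun he => h (sub_eq_zero.mp ((hv.1 _).mp he))
    simpa [sub_self, (hv.1 0).mpr rfl] using lt_top_iff_ne_top.mpr this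
  · intro f g h x hc
    simpa [add_sub_add_left_eq_sub] using hc
  · intro g h
    simp [not_lt]
end

section
/- A C-quasi-order ≾ on an abelian group G is valuational if and only if every element of G is v-type. -/
section AuxProof
variable {G : Type*} [AddCommGroup G]

/-- The setoid on `G` given by `a ∼ b ↔ q a b ∧ q b a`. -/
def qSetoid (q : G → G → Prop) (hrefl : Reflexive q) (htrans : Transitive q) : Setoid G where
  r a b := q a b ∧ q b a
  iseqv := ⟨fun a => ⟨hrefl a, hrefl a⟩, fun h => ⟨h.2, h.1⟩,
    fun h1 h2 => ⟨htrans h1.1 h2.1, htrans h2.2 h1.2⟩⟩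

/-- The linear order on the quotient, reversing `q`. -/
noncomputable def qLO (q : G → G → Prop) (hrefl : Reflexive q) (htrans : Transitive q)
    (htot : ∀ a b, q a b ∨ q b a) :
    LinearOrder (Quotient (qSetoid q hrefl htrans)) where
  le := Quotient.lift₂ (fun a b => q b a) (by
    rintro a b c d ⟨hac1, hac2⟩ ⟨hbd1, hbd2⟩
    exact propext ⟨fun h => htrans (htrans hbd2 h) hac1,
      fun h => htrans (htrans hbd1 h) hac2⟩)
  le_refl := by rintro ⟨a⟩; exact hrefl a
  le_trans := by rintro ⟨a⟩ ⟨b⟩ ⟨c⟩ h1 h2; exact htrans h2 h1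
  le_antisymm := by rintro ⟨a⟩ ⟨b⟩ h1 h2; exact Quotient.sound ⟨h2, h1⟩
  le_total := by rintro ⟨a⟩ ⟨b⟩; exact htot b a
  toDecidableLE := fun _ _ => Classical.dec _

open Classical

/-- The valuation built from a suitable quasi-order. -/
noncomputable def qVal (q : G → G → Prop) (hrefl : Reflexive q) (htrans : Transitive q)
    (htot : ∀ a b, q a b ∨ q b a)
    (hneg : ∀ g : G, q (-g) g)
    (hsub : ∀ a b : G, q (a + b) a ∨ q (a + b) b) : ValuationOn G where
  Γ := Quotient (qSetoid q hrefl htrans)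
  lo := qLO q hrefl htrans htot
  v g := if g = 0 then ⊤ else ((Quotient.mk (qSetoid q hrefl htrans) g : _) : WithTop _)
  top_iff := by
    intro g
    by_cases h : g = 0 <;> simp [h]
  sub_min := by
    letI : LinearOrder (Quotient (qSetoid q hrefl htrans)) := qLO q hrefl htrans htot
    intro g h
    by_cases hgh : g - h = 0
    · simp [hgh]
    by_cases hh : h = 0
    · rw [hh, sub_zero] at hgh ⊢
      simp only [if_neg hgh, if_pos rfl]
      exact min_le_left _ _
    by_cases hg : g = 0
    · rw [hg, zero_sub] at hgh ⊢
      simp only [if_pos rfl, if_neg hh, if_neg hgh]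
      refine le_trans (min_le_right _ _) (WithTop.coe_le_coe.mpr ?_)
      exact hneg h
    · simp only [if_neg hgh, if_neg hh, if_neg hg]
      have := hsub g (-h)
      rw [← sub_eq_add_neg] at this
      rcases this with h1 | h1
      · exact le_trans (min_le_left _ _) (WithTop.coe_le_coe.mpr h1)
      · exact le_trans (min_le_right _ _)
          (WithTop.coe_le_coe.mpr (htrans h1 (hneg h)))

theorem qVal_iff (q : G → G → Prop) (hrefl : Reflexive q) (htrans : Transitive q)
    (htot : ∀ a b, q a b ∨ q b a)
    (hneg : ∀ g : G, q (-g) g)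
    (hsub : ∀ a b : G, q (a + b) a ∨ q (a + b) b)
    (hq0 : ∀ h : G, q 0 h) (hn0 : ∀ g : G, g ≠ 0 → ¬ q g 0) (g h : G) :
    q g h ↔ (qVal q hrefl htrans htot hneg hsub).v h ≤ (qVal q hrefl htrans htot hneg hsub).v g := by
  letI : LinearOrder (Quotient (qSetoid q hrefl htrans)) := qLO q hrefl htrans htot
  by_cases hh : h = 0
  · subst hh
    by_cases hg : g = 0
    · subst hg
      simp [qVal, hrefl 0]
      exact le_rfl
    · simp only [qVal, if_neg hg, if_pos rfl]
      constructor
      · intro hx; exact absurd hx (hn0 g hg)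
      · intro hx; exact absurd (top_le_iff.mp hx) (WithTop.coe_ne_top)
  · by_cases hg : g = 0
    · subst hg
      simp only [qVal, if_neg hh, if_pos rfl]
      exact ⟨fun _ => (le_top : _ ≤ (⊤ : WithTop (Quotient (qSetoid q hrefl htrans)))), fun _ => hq0 h⟩
    · simp only [qVal, if_neg hh, if_neg hg]
      refine Iff.trans ?_ WithTop.coe_le_coe.symm
      exact Iff.rfl

end AuxProof

theorem stmt10 {G : Type u} [AddCommGroup G] (q : G → G → Prop)
    (hq : IsCqo q) :
    IsValuational q ↔ ∀ g : G, VType q g := by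
  obtain ⟨C, hC, hiff⟩ := hq
  have qrefl : Reflexive q := fun g => (hiff g g).mpr (fun h => hC.2.1 g g 0 h h)
  have qtrans : Transitive q := by
    intro g h k hgh hhk
    rw [hiff]
    intro hgk
    rcases hC.2.2.1 h g k 0 hgk with h1 | h2
    · exact (hiff h k).mp hhk h1
    · exact (hiff g h).mp hgh h2
  have qtot : ∀ a b : G, q a b ∨ q b a := by
    intro a b
    by_cases hab : q a b
    · exact Or.inl hab
    · have hCab : C a b 0 := by
        by_contra hc; exact hab ((hiff a b).mpr hc)
      exact Or.inr ((hiff b a).mpr (fun hba => hC.2.1 a b 0 hCab hba))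
  have hq0 : ∀ h : G, q 0 h := by
    intro h
    refine (hiff 0 h).mpr (fun hc => ?_)
    have := hC.1 0 h 0 hc
    exact hC.2.1 0 0 h this this
  have hn0 : ∀ g : G, g ≠ 0 → ¬ q g 0 :=
    fun g hg hq' => (hiff g 0).mp hq' (hC.2.2.2.1 g 0 hg)
  constructor
  · rintro ⟨V, hV⟩ g
    have hv0 : V.v 0 = ⊤ := (V.top_iff 0).mpr rfl
    have h1 : V.v g ≤ V.v (-g) := by
      have := V.sub_min 0 g
      rwa [zero_sub, hv0, min_top_left] at this
    have h2 : V.v (-g) ≤ V.v g := by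
      have := V.sub_min 0 (-g)
      rwa [zero_sub, neg_neg, hv0, min_top_left] at this
    exact ⟨(hV g (-g)).mpr h2, (hV (-g) g).mpr h1⟩
  · intro hv
    have hneg : ∀ g : G, q (-g) g := fun g => (hv g).2
    have hsub : ∀ a b : G, q (a + b) a ∨ q (a + b) b := by
      intro a b
      by_contra hcon
      push_neg at hcon
      obtain ⟨h1, h2⟩ := hcon
      have c1 : C (a + b) a 0 := by
        by_contra hc; exact h1 ((hiff _ _).mpr hc)
      have c2 : C (a + b) b 0 := by
        by_contra hc; exact h2 ((hiff _ _).mpr hc)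
      have t1 := hC.2.2.2.2 _ _ _ (-a) c1
      have t2 := hC.2.2.2.2 _ _ _ (-b) c2
      rw [show -a + (a + b) = b by abel, show -a + a = 0 by abel,
        show -a + 0 = -a by abel] at t1
      rw [show -b + (a + b) = a by abel, show -b + b = 0 by abel,
        show -b + 0 = -b by abel] at t2
      have s1 : C b (-a) 0 := hC.1 _ _ _ t1
      have s2 : C a (-b) 0 := hC.1 _ _ _ t2
      have nq1 : ¬ q b (-a) := fun h => (hiff _ _).mp h s1
      have nq2 : ¬ q a (-b) := fun h => (hiff _ _).mp h s2
      have qba : q b a := qtrans (hv b).1 ((qtot a (-b)).resolve_left nq2)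
      exact nq1 (qtrans qba (hv a).1)
    exact ⟨qVal q qrefl qtrans qtot hneg hsub,
      qVal_iff q qrefl qtrans qtot hneg hsub hq0 hn0⟩
end

section
/- Let ≾ be an o-type C-quasi-order on an abelian group G. Then P := {g ∈ G | −g ≾ g} is a positive cone of G (i.e., P ∩ (−P) = {0}, P ∪ (−P) = G, and P + P ⊆ P), and P is stable under ∼ (if g ∈ P and g ∼ h then h ∈ P). -/
theorem stmt11 {G : Type u} [AddCommGroup G] (q : G → G → Prop)
    (hq : IsCqo q) (ho : ∀ g : G, OType q g) :
    ({g : G | q (-g) g} ∩ (-{g : G | q (-g) g}) = {0}) ∧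
    ({g : G | q (-g) g} ∪ (-{g : G | q (-g) g}) = Set.univ) ∧
    (∀ a ∈ {g : G | q (-g) g}, ∀ b ∈ {g : G | q (-g) g}, a + b ∈ {g : G | q (-g) g}) ∧
    (∀ g h : G, q (-g) g → QOEquiv q g h → q (-h) h) := by
  obtain ⟨C, hC, hiff⟩ := hq
  obtain ⟨c1, c2, c3, c4, c5⟩ := hC
  have tot : ∀ g h : G, q g h ∨ q h g := by
    intro g h
    by_contra hc
    push_neg at hc
    have h1 : C g h 0 := by_contra fun hn => hc.1 ((hiff g h).mpr hn)
    have h2 : C h g 0 := by_contra fun hn => hc.2 ((hiff h g).mpr hn)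
    exact c2 g h 0 h1 h2
  have qrefl : ∀ g : G, q g g := fun g => (tot g g).elim id id
  have qtrans : ∀ a b c : G, q a b → q b c → q a c := by
    intro a b c hab hbc
    rw [hiff] at *
    intro hac
    rcases c3 b a c 0 hac with h | h
    · exact hbc h
    · exact hab h
  have z0 : ∀ g : G, q g 0 → g = 0 := by
    intro g hg
    by_contra hn
    exact (hiff g 0).mp hg (c4 g 0 hn)
  have M : ∀ X Y : G, q Y X ↔ q (Y - X) (-X) := by
    intro X Y
    rw [hiff, hiff]
    constructor <;> intro h hcc <;> apply h
    · have h1 := c1 _ _ _ hcc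
      have h2 := c5 _ _ _ X h1
      rw [show X + (Y - X) = Y from by abel, show X + (0:G) = X from by abel,
        show X + -X = (0:G) from by abel] at h2
      exact h2
    · have h2 := c5 _ _ _ (-X) hcc
      rw [show -X + Y = Y - X from by abel, show -X + X = (0:G) from by abel,
        show -X + (0:G) = -X from by abel] at h2
      exact c1 _ _ _ h2
  refine ⟨?_, ?_, ?_, ?_⟩
  · ext g
    simp only [Set.mem_inter_iff, Set.mem_neg, Set.mem_setOf_eq, Set.mem_singleton_iff, neg_neg]
    constructor
    · rintro ⟨h1, h2⟩
      rcases ho g with hne | h0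
      · exact absurd (⟨h2, h1⟩ : QOEquiv q g (-g)) hne
      · exact h0
    · rintro rfl
      simp only [neg_zero]
      exact ⟨qrefl 0, qrefl 0⟩
  · ext g
    simp only [Set.mem_union, Set.mem_neg, Set.mem_setOf_eq, Set.mem_univ, iff_true, neg_neg]
    exact tot (-g) g
  · intro a ha b hb
    simp only [Set.mem_setOf_eq] at *
    rcases eq_or_ne a 0 with rfl | ha0
    · simpa using hb
    rcases eq_or_ne b 0 with rfl | hb0
    · simpa using ha
    have hsa : ¬ q a (-a) := by
      rcases ho a with hne | h0
      · exact fun hq' => hne ⟨hq', ha⟩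
      · exact absurd h0 ha0
    have hsb : ¬ q b (-b) := by
      rcases ho b with hne | h0
      · exact fun hq' => hne ⟨hq', hb⟩
      · exact absurd h0 hb0
    by_contra hs
    have key : ∀ x y : G, q (-x) x → ¬ q x (-x) → ¬ q y (-y) →
        ¬ q y (-x) → ¬ q (-(x+y)) (x+y) → False := by
      intro x y hx hsx hsy hxy hss
      have hy : q (-y) y := (tot _ _).resolve_right hsy
      have hs1 : q (x+y) (-(x+y)) := (tot _ _).resolve_left hss
      have has : ¬ q (x+y) x := by
        intro hqq
        have h' := (M x (x+y)).mp hqq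
        rw [show x + y - x = y from by abel] at h'
        exact hxy h'
      have hax : q x (x+y) := (tot _ _).resolve_right has
      by_cases hA : q (-(x+y)) y
      · have hsyx : ¬ q y (x+y) := fun hq' => hss (qtrans _ _ _ hA hq')
        apply hsyx
        apply (M (x+y) y).mpr
        rw [show y - (x+y) = -x from by abel]
        exact qtrans _ _ _ (qtrans _ _ _ hx hax) hs1
      · have hsb2 : ¬ q (-(x+y)) (-y) := fun hq' => hA (qtrans _ _ _ hq' hy)
        apply hsb2
        apply (M (-y) (-(x+y))).mpr
        rw [show -(x+y) - -y = -x from by abel, neg_neg]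
        exact (tot _ _).resolve_left hxy
    have hw : ¬ q b (-a) ∨ ¬ q a (-b) := by
      by_contra hcon
      push_neg at hcon
      have h1 : ¬ q a b := fun hq' => hsa (qtrans _ _ _ hq' hcon.1)
      have h2 : ¬ q b a := fun hq' => hsb (qtrans _ _ _ hq' hcon.2)
      rcases tot a b with h | h
      exacts [h1 h, h2 h]
    rcases hw with h | h
    · exact key a b ha hsa hsb h hs
    · apply key b a hb hsb hsa h
      rw [add_comm]
      exact hs
  · intro g h hg hgh
    obtain ⟨hgh1, hhg⟩ := hgh
    rcases eq_or_ne g 0 with rfl | hg0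
    · obtain rfl : h = 0 := z0 h hhg
      simpa using qrefl 0
    by_contra hh
    have hsg : ¬ q g (-g) := by
      rcases ho g with hne | h0
      · exact fun hq' => hne ⟨hq', hg⟩
      · exact absurd h0 hg0
    have h2 : ¬ q (-h) (-g) := fun hq' => hh (qtrans _ _ _ (qtrans _ _ _ hq' hg) hgh1)
    have h4 : q (h - g) (-g) := (M g h).mp hhg
    have h5 : q g (g - h) := by
      apply (tot _ _).resolve_left
      intro hq'
      apply h2
      have h' := (M g (g - h)).mp hq'
      rw [show g - h - g = -h from by abel] at h'
      exact h'
    have h6 : q h (h - g) := by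
      apply (M (h - g) h).mpr
      rw [show h - (h - g) = g from by abel, neg_sub]
      exact h5
    exact hsg (qtrans _ _ _ (qtrans _ _ _ hgh1 h6) h4)
end

section
/- For every group order ≤ on an abelian group G with positive cone P, there exists an o-type C-quasi-order ≾ on G such that {g ∈ G | −g ≾ g} = P; that is, the map Ω from o-type C-q.o.'s on G to group orders on G, sending ≾ to the order with positive cone {g | −g ≾ g}, is surjective. -/
theorem stmt12 {G : Type u} [AddCommGroup G] (le : G → G → Prop)
    (hle : IsGroupOrder le) :
    ∃ q : G → G → Prop, IsCqo q ∧ (∀ g : G, OType q g) ∧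
      {g : G | q (-g) g} = {g : G | le 0 g} := by
  obtain ⟨⟨hrefl, htrans, htot⟩, hanti, hadd⟩ := hle
  have hsub : ∀ a b c : G, le a b → le (a - c) (b - c) := by
    intro a b c h
    simpa [sub_eq_add_neg] using hadd a b (-c) h
  have hneg : ∀ a : G, le a 0 → le 0 (-a) := by
    intro a h
    simpa using hsub a 0 a h
  have hneg' : ∀ a : G, le 0 a → le (-a) 0 := by
    intro a h
    simpa using hsub 0 a a h
  set q : G → G → Prop := fun a b =>
    a = 0 ∨ (le a 0 ∧ a ≠ 0 ∧ b ≠ 0) ∨ (le 0 a ∧ a ≠ 0 ∧ le a b) with hqdef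
  have hq_iff : ∀ a b : G, q a b ↔
      (a = 0 ∨ (le a 0 ∧ a ≠ 0 ∧ b ≠ 0) ∨ (le 0 a ∧ a ≠ 0 ∧ le a b)) := fun a b => Iff.rfl
  -- reflexivity of q
  have hreflq : ∀ a : G, q a a := by
    intro a
    by_cases ha : a = 0
    · exact Or.inl ha
    · rcases htot a 0 with h | h
      · exact Or.inr (Or.inl ⟨h, ha, ha⟩)
      · exact Or.inr (Or.inr ⟨h, ha, hrefl a⟩)
  -- totality of q
  have htotq : ∀ a b : G, q a b ∨ q b a := by
    intro a b
    by_cases ha : a = 0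
    · exact Or.inl (Or.inl ha)
    by_cases hb : b = 0
    · exact Or.inr (Or.inl hb)
    rcases htot a 0 with h | h
    · exact Or.inl (Or.inr (Or.inl ⟨h, ha, hb⟩))
    · rcases htot b 0 with h' | h'
      · exact Or.inr (Or.inr (Or.inl ⟨h', hb, ha⟩))
      · rcases htot a b with h'' | h''
        · exact Or.inl (Or.inr (Or.inr ⟨h, ha, h''⟩))
        · exact Or.inr (Or.inr (Or.inr ⟨h', hb, h''⟩))
  -- transitivity of q
  have htransq : ∀ a b c : G, q a b → q b c → q a c := by
    intro a b c hab hbc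
    rcases hab with ha | ⟨h1, h2, h3⟩ | ⟨h1, h2, h3⟩
    · exact Or.inl ha
    · -- le a 0, a ≠ 0, b ≠ 0; need c ≠ 0
      rcases hbc with hb | ⟨g1, g2, g3⟩ | ⟨g1, g2, g3⟩
      · exact absurd hb h3
      · exact Or.inr (Or.inl ⟨h1, h2, g3⟩)
      · refine Or.inr (Or.inl ⟨h1, h2, ?_⟩)
        intro hc
        rw [hc] at g3
        exact g2 (hanti b 0 g3 g1)
    · -- le 0 a, a ≠ 0, le a b
      rcases hbc with hb | ⟨g1, g2, g3⟩ | ⟨g1, g2, g3⟩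
      · rw [hb] at h3
        exact absurd (hanti a 0 h3 h1) h2
      · exact absurd (hanti a 0 (htrans h3 g1) h1) h2
      · exact Or.inr (Or.inr ⟨h1, h2, htrans h3 g3⟩)
  -- the key "symmetry" condition
  have hiv : ∀ u v : G, q u v → q (u - v) (-v) := by
    intro u v huv
    rcases huv with hu | ⟨h1, h2, h3⟩ | ⟨h1, h2, h3⟩
    · rw [hu, zero_sub]
      exact hreflq (-v)
    · -- le u 0, u ≠ 0, v ≠ 0
      by_cases huv0 : u - v = 0
      · exact Or.inl huv0
      have hnv : (-v : G) ≠ 0 := neg_ne_zero.mpr h3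
      have hle_uv_nv : le (u - v) (-v) := by
        simpa using hsub u 0 v h1
      rcases htot v 0 with hv | hv
      · -- v ≤ 0, so -v ≥ 0
        rcases htot (u - v) 0 with h' | h'
        · exact Or.inr (Or.inl ⟨h', huv0, hnv⟩)
        · exact Or.inr (Or.inr ⟨h', huv0, hle_uv_nv⟩)
      · -- 0 ≤ v, so u - v ≤ -v ≤ 0
        have : le (u - v) 0 := htrans hle_uv_nv (hneg' v hv)
        exact Or.inr (Or.inl ⟨this, huv0, hnv⟩)
    · -- le 0 u, u ≠ 0, le u v
      by_cases huv0 : u - v = 0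
      · exact Or.inl huv0
      have hv0 : v ≠ 0 := by
        intro hv
        rw [hv] at h3
        exact h2 (hanti u 0 h3 h1)
      have hle1 : le (u - v) 0 := by
        simpa using hsub u v v h3
      exact Or.inr (Or.inl ⟨hle1, huv0, neg_ne_zero.mpr hv0⟩)
  -- key characterization: for g ≠ 0, q (-g) g ↔ le 0 g
  have hA : ∀ g : G, g ≠ 0 → (q (-g) g ↔ le 0 g) := by
    intro g hg
    constructor
    · rintro (h | ⟨h1, h2, h3⟩ | ⟨h1, h2, h3⟩)
      · exact absurd (neg_eq_zero.mp h) hg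
      · simpa using hneg (-g) h1
      · exact htrans h1 h3
    · intro h
      exact Or.inr (Or.inl ⟨hneg' g h, neg_ne_zero.mpr hg, hg⟩)
  refine ⟨q, ⟨fun x y z => ¬ q (x - z) (y - z), ⟨?_, ?_, ?_, ?_, ?_⟩, ?_⟩, ?_, ?_⟩
  · -- C x y z → C x z y
    intro x y z h hq1
    have h2 := hiv (x - y) (z - y) hq1
    rw [sub_sub_sub_cancel_right, neg_sub] at h2
    exact h h2
  · -- C x y z → ¬ C y x z
    intro x y z h h'
    rcases htotq (x - z) (y - z) with h1 | h1
    · exact h h1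
    · exact h' h1
  · -- C x y z → C w y z ∨ C x w z
    intro w x y z h
    by_contra hc
    push_neg at hc
    exact h (htransq _ _ _ hc.2 hc.1)
  · -- x ≠ y → C x y y
    intro x y hxy
    have hne : x - y ≠ 0 := sub_ne_zero.mpr hxy
    rintro (h | ⟨h1, h2, h3⟩ | ⟨h1, h2, h3⟩)
    · exact hne h
    · rw [sub_self] at h3
      exact h3 rfl
    · rw [sub_self] at h3
      exact hne (hanti _ _ h3 h1)
  · -- translation invariance
    intro f g h x hC
    simpa [add_sub_add_left_eq_sub] using hC
  · -- q g h ↔ ¬ C g h 0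
    intro g h
    simp only [sub_zero, not_not]
  · -- o-type
    intro g
    by_cases hg : g = 0
    · exact Or.inr hg
    · left
      rintro ⟨h1, h2⟩
      have hg' : le 0 g := (hA g hg).mp h2
      have h1' : q (-(-g)) (-g) := by rwa [neg_neg]
      have : le 0 (-g) := (hA (-g) (neg_ne_zero.mpr hg)).mp h1'
      have : le g 0 := by simpa using hneg' (-g) this
      exact hg (hanti g 0 this hg')
  · -- the positive cone
    ext g
    simp only [Set.mem_setOf_eq]
    by_cases hg : g = 0
    · subst hg
      simp only [neg_zero]
      exact iff_of_true (Or.inl rfl) (hrefl 0)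
    · exact hA g hg
end

section
/- Let ≾ be a C-quasi-order on an abelian group G and let v : G → Γ ∪ {∞} be a valuation on G. Then the following are equivalent: (1) every G^γ is ≾-convex; (2) every G_γ is ≾-convex; (3) for every γ ∈ Γ, ≾ induces a q.o. ≾_γ on G^γ/G_γ (the induced relation is transitive) and ≾_γ is a C-q.o.; (4) v is compatible with ≾. Moreover, in this case ≾ is v-type (respectively o-type) if and only if each ≾_γ is v-type (respectively o-type). -/
section StmtAux
variable {G : Type*} [AddCommGroup G] {Γ : Type*} [LinearOrder Γ]

theorem myIsCqo_iff {q : G → G → Prop} :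
    IsCqo q ↔ ((∀ a b, q a b ∨ q b a) ∧ (∀ a b c, q a b → q b c → q a c) ∧
      (∀ a, q a 0 → a = 0) ∧ (∀ a b, q a b ↔ q (a - b) (-b))) := by
  constructor
  · rintro ⟨C, ⟨c1, c2, c3, c4, c5⟩, hqc⟩
    refine ⟨?_, ?_, ?_, ?_⟩
    · intro a b
      by_contra hcon
      push_neg at hcon
      have h1 : C a b 0 := by by_contra hC; exact hcon.1 ((hqc a b).mpr hC)
      have h2 : C b a 0 := by by_contra hC; exact hcon.2 ((hqc b a).mpr hC)
      exact c2 a b 0 h1 h2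
    · intro a b c hab hbc
      rw [hqc]
      intro hC
      rcases c3 b a c 0 hC with h | h
      · exact (hqc b c).mp hbc h
      · exact (hqc a b).mp hab h
    · intro a ha
      by_contra hne
      exact (hqc a 0).mp ha (c4 a 0 hne)
    · intro a b
      rw [hqc, hqc]
      constructor
      · intro h hC
        apply h
        have h2 := c5 _ _ _ b hC
        have e1 : b + (a - b) = a := by abel
        have e2 : b + -b = 0 := by abel
        have e3 : b + 0 = b := by abel
        rw [e1, e2, e3] at h2
        exact c1 a 0 b h2
      · intro h hC
        apply h
        have h2 := c5 _ _ _ (-b) (c1 a b 0 hC)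
        have e1 : -b + a = a - b := by abel
        have e2 : -b + 0 = -b := by abel
        have e3 : -b + b = 0 := by abel
        rw [e1, e2, e3] at h2
        exact h2
  · rintro ⟨tot, htr, hz, hD⟩
    refine ⟨fun a b c => ¬ q (a - c) (b - c), ⟨?_, ?_, ?_, ?_, ?_⟩, ?_⟩
    · intro x y z h hcon
      apply h
      have := (hD (x - z) (y - z)).mpr
      apply this
      have e1 : x - z - (y - z) = x - y := by abel
      have e2 : -(y - z) = z - y := by abel
      rw [e1, e2]
      exact hcon
    · intro x y z h h2
      exact h2 ((tot (x - z) (y - z)).resolve_left h)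
    · intro w x y z h
      by_contra hcon
      rw [not_or, not_not, not_not] at hcon
      exact h (htr _ _ _ hcon.2 hcon.1)
    · intro x y hne hqxy
      rw [sub_self] at hqxy
      exact hne (sub_eq_zero.mp (hz _ hqxy))
    · intro f g h x hC hq
      apply hC
      have e1 : x + f - (x + h) = f - h := by abel
      have e2 : x + g - (x + h) = g - h := by abel
      rw [e1, e2] at hq
      exact hq
    · intro g h
      show q g h ↔ ¬¬ q (g - 0) (h - 0)
      rw [sub_zero, sub_zero, not_not]

variable {v : G → WithTop Γ} {hv : IsGroupVal v} {q : G → G → Prop} {γ : Γ}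

theorem my_vNeg (hv : IsGroupVal v) (a : G) : v (-a) = v a :=
  le_antisymm (by simpa using hv.le_neg (-a)) (hv.le_neg a)

theorem mem_vGge_iff {g : G} : g ∈ vGge v hv γ ↔ (γ : WithTop Γ) ≤ v g := Iff.rfl

theorem mem_vGlt_iff {g : G} : g ∈ vGlt v hv γ ↔ (γ : WithTop Γ) < v g := Iff.rfl

theorem my_vMk_eq_zero {g : G} (hg : g ∈ vGge v hv γ) :
    vMk v hv γ g hg = 0 ↔ (γ : WithTop Γ) < v g := by
  rw [vMk, QuotientAddGroup.eq_zero_iff, AddSubgroup.mem_addSubgroupOf]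
  exact Iff.rfl

theorem my_vMk_eq {a b : G} (ha : a ∈ vGge v hv γ) (hb : b ∈ vGge v hv γ) :
    vMk v hv γ a ha = vMk v hv γ b hb ↔ (γ : WithTop Γ) < v (b - a) := by
  rw [vMk, vMk, QuotientAddGroup.eq, AddSubgroup.mem_addSubgroupOf]
  show (γ : WithTop Γ) < v (-a + b) ↔ _
  rw [neg_add_eq_sub]

theorem my_vQuot_rep (x : vQuot v hv γ) :
    ∃ (a : G) (ha : a ∈ vGge v hv γ), vMk v hv γ a ha = x := by
  refine QuotientAddGroup.induction_on x ?_
  rintro ⟨a, ha⟩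
  exact ⟨a, ha, rfl⟩

theorem my_vMk_neg {a : G} (ha : a ∈ vGge v hv γ) :
    vMk v hv γ (-a) (neg_mem ha) = -(vMk v hv γ a ha) := rfl

theorem my_vMk_sub {a b : G} (ha : a ∈ vGge v hv γ) (hb : b ∈ vGge v hv γ) :
    vMk v hv γ (a - b) (sub_mem ha hb) = vMk v hv γ a ha - vMk v hv γ b hb := rfl

theorem my_vAdd (hv : IsGroupVal v) {b h : G} (hlt : v b < v h) : v (b + h) = v b := by
  refine le_antisymm ?_ ?_
  · by_contra hgt
    push_neg at hgt
    have h1 := hv.2 (b + h) h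
    rw [add_sub_cancel_right] at h1
    exact absurd h1 (not_le.mpr (lt_min hgt hlt))
  · have h1 := hv.2 b (-h)
    rw [sub_neg_eq_add] at h1
    refine le_trans (le_min le_rfl ?_) h1
    rw [my_vNeg hv]
    exact hlt.le

theorem my_E (hv : IsGroupVal v) (hD : ∀ a b : G, q a b ↔ q (a - b) (-b))
    (hstrict : ∀ u w : G, v u < v w → q w u)
    {b h : G} (hlt : v b < v h) : q b (b + h) ∧ q (b + h) b := by
  have hvb : v (b + h) = v b := my_vAdd hv hlt
  constructor
  · refine (hD b (b + h)).mpr ?_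
    have e : b - (b + h) = -h := by abel
    rw [e]
    refine hstrict _ _ ?_
    rw [my_vNeg hv, my_vNeg hv, hvb]
    exact hlt
  · refine (hD (b + h) b).mpr ?_
    have e : b + h - b = h := by abel
    rw [e]
    refine hstrict _ _ ?_
    rw [my_vNeg hv]
    exact hlt

theorem my_W (hv : IsGroupVal v) (htr : ∀ a b c : G, q a b → q b c → q a c)
    (hD : ∀ a b : G, q a b ↔ q (a - b) (-b))
    (hstrict : ∀ u w : G, v u < v w → q w u)
    {a b a' b' : G} {ha : a ∈ vGge v hv γ} {hb : b ∈ vGge v hv γ}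
    {ha' : a' ∈ vGge v hv γ} {hb' : b' ∈ vGge v hv γ}
    (hea : vMk v hv γ a ha = vMk v hv γ a' ha')
    (heb : vMk v hv γ b hb = vMk v hv γ b' hb')
    (hna : vMk v hv γ a ha ≠ 0) (hnb : vMk v hv γ b hb ≠ 0)
    (hab : q a b) : q a' b' := by
  have hva : v a = (γ : WithTop Γ) :=
    le_antisymm (not_lt.mp (fun h => hna ((my_vMk_eq_zero ha).mpr h))) (mem_vGge_iff.mp ha)
  have hvb : v b = (γ : WithTop Γ) :=
    le_antisymm (not_lt.mp (fun h => hnb ((my_vMk_eq_zero hb).mpr h))) (mem_vGge_iff.mp hb)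
  have h1 : v a < v (a' - a) := by rw [hva]; exact (my_vMk_eq ha ha').mp hea
  have h2 : v b < v (b' - b) := by rw [hvb]; exact (my_vMk_eq hb hb').mp heb
  obtain ⟨_, ea2⟩ := my_E hv hD hstrict h1
  obtain ⟨eb1, _⟩ := my_E hv hD hstrict h2
  have e1 : a + (a' - a) = a' := by abel
  have e2 : b + (b' - b) = b' := by abel
  rw [e1] at ea2
  rw [e2] at eb1
  exact htr _ _ _ ea2 (htr _ _ _ hab eb1)

theorem my_proj (hv : IsGroupVal v) (htr : ∀ a b c : G, q a b → q b c → q a c)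
    (hD : ∀ a b : G, q a b ↔ q (a - b) (-b))
    (hstrict : ∀ u w : G, v u < v w → q w u)
    {a b : G} {ha : a ∈ vGge v hv γ} {hb : b ∈ vGge v hv γ}
    (hna : vMk v hv γ a ha ≠ 0) (hnb : vMk v hv γ b hb ≠ 0)
    (h : vInd v hv q γ (vMk v hv γ a ha) (vMk v hv γ b hb)) : q a b := by
  obtain ⟨c, d, hcm, hdm, hec, hed, hcd⟩ := h
  exact my_W hv htr hD hstrict hec hed
    (by rw [hec]; exact hna) (by rw [hed]; exact hnb) hcd

end StmtAux

theorem stmt13 {G : Type u} [AddCommGroup G] {Γ : Type*} [LinearOrder Γ]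
    (v : G → WithTop Γ) (hv : IsGroupVal v) (q : G → G → Prop) (hq : IsCqo q) :
    ((∀ γ : Γ, QOConvex q ((vGge v hv γ : AddSubgroup G) : Set G)) ↔
        (∀ γ : Γ, QOConvex q ((vGlt v hv γ : AddSubgroup G) : Set G))) ∧
    ((∀ γ : Γ, QOConvex q ((vGge v hv γ : AddSubgroup G) : Set G)) ↔
        (∀ γ : Γ, Transitive (vInd v hv q γ) ∧ IsCqo (vInd v hv q γ))) ∧
    ((∀ γ : Γ, QOConvex q ((vGge v hv γ : AddSubgroup G) : Set G)) ↔ ValCompat v q) ∧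
    (ValCompat v q →
      (((∀ g : G, VType q g) ↔ ∀ (γ : Γ) (x : vQuot v hv γ), VType (vInd v hv q γ) x) ∧
        ((∀ g : G, OType q g) ↔ ∀ (γ : Γ) (x : vQuot v hv γ), OType (vInd v hv q γ) x))) := by
  classical
  obtain ⟨tot, htr, hz, hD⟩ := myIsCqo_iff.mp hq
  have qrefl : ∀ g : G, q g g := fun g => (tot g g).elim id id
  have q0 : ∀ g : G, q 0 g := by
    intro g
    rcases tot 0 g with h | h
    · exact h
    · rw [hz g h]; exact qrefl 0
  have mkstrict : ValCompat v q → ∀ u w : G, v u < v w → q w u := by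
    intro hc u w hlt
    rcases tot w u with h | h
    · exact h
    · exact absurd (hc u w (q0 u) h) (not_le.mpr hlt)
  have hAD : (∀ γ : Γ, QOConvex q ((vGge v hv γ : AddSubgroup G) : Set G)) → ValCompat v q := by
    intro hA g h hq0 hqgh
    by_contra hcon
    push_neg at hcon
    rcases eq_or_ne (v h) ⊤ with ht | ht
    · rw [(hv.1 h).mp ht] at hqgh
      rw [hz g hqgh, (hv.1 0).mpr rfl] at hcon
      exact not_top_lt hcon
    · obtain ⟨δ, hδ⟩ := WithTop.ne_top_iff_exists.mp ht
      have hgm : g ∈ ((vGge v hv δ : AddSubgroup G) : Set G) :=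
        hA δ g 0 h (zero_mem _) (mem_vGge_iff.mpr hδ.le) hq0 hqgh
      rw [← hδ] at hcon
      exact absurd (mem_vGge_iff.mp hgm) (not_le.mpr hcon)
  have hBD : (∀ γ : Γ, QOConvex q ((vGlt v hv γ : AddSubgroup G) : Set G)) → ValCompat v q := by
    intro hB g h hq0 hqgh
    by_contra hcon
    push_neg at hcon
    obtain ⟨δ, hδ⟩ := WithTop.ne_top_iff_exists.mp (ne_top_of_lt hcon)
    have hgm : g ∈ ((vGlt v hv δ : AddSubgroup G) : Set G) :=
      hB δ g 0 h (zero_mem _) (mem_vGlt_iff.mpr (by rw [hδ]; exact hcon)) hq0 hqgh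
    have h2 : (δ : WithTop Γ) < v g := mem_vGlt_iff.mp hgm
    rw [hδ] at h2
    exact lt_irrefl _ h2
  have hDA : ValCompat v q → ∀ γ : Γ, QOConvex q ((vGge v hv γ : AddSubgroup G) : Set G) := by
    intro hc γ a b c _ hcmem _ hac
    have h1 : v c ≤ v a := hc a c (q0 a) hac
    exact mem_vGge_iff.mpr (le_trans (mem_vGge_iff.mp hcmem) h1)
  have hDB : ValCompat v q → ∀ γ : Γ, QOConvex q ((vGlt v hv γ : AddSubgroup G) : Set G) := by
    intro hc γ a b c _ hcmem _ hac
    have h1 : v c ≤ v a := hc a c (q0 a) hac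
    exact mem_vGlt_iff.mpr (lt_of_lt_of_le (mem_vGlt_iff.mp hcmem) h1)
  have hCD : (∀ γ : Γ, Transitive (vInd v hv q γ) ∧ IsCqo (vInd v hv q γ)) → ValCompat v q := by
    intro hC g h hq0 hqgh
    by_contra hcon
    push_neg at hcon
    obtain ⟨γ, hγ⟩ := WithTop.ne_top_iff_exists.mp (ne_top_of_lt hcon)
    have hg : g ∈ vGge v hv γ := mem_vGge_iff.mpr hγ.le
    have hh : h ∈ vGge v hv γ := mem_vGge_iff.mpr (le_of_lt (by rw [hγ]; exact hcon))
    obtain ⟨_, _, hz', _⟩ := myIsCqo_iff.mp (hC γ).2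
    have hzero : vMk v hv γ h hh = 0 := (my_vMk_eq_zero hh).mpr (by rw [hγ]; exact hcon)
    have hind : vInd v hv q γ (vMk v hv γ g hg) 0 := by
      rw [← hzero]; exact ⟨g, h, hg, hh, rfl, rfl, hqgh⟩
    have hg0 : (γ : WithTop Γ) < v g := (my_vMk_eq_zero hg).mp (hz' _ hind)
    rw [hγ] at hg0
    exact lt_irrefl _ hg0
  have vzl : ∀ (γ : Γ) (y : vQuot v hv γ), vInd v hv q γ 0 y := by
    intro γ y
    obtain ⟨b, hb, hmb⟩ := my_vQuot_rep y
    refine ⟨0, b, zero_mem _, hb, ?_, hmb, q0 b⟩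
    rw [my_vMk_eq_zero, (hv.1 0).mpr rfl]
    exact WithTop.coe_lt_top γ
  have vrefl : ∀ (γ : Γ) (x : vQuot v hv γ), vInd v hv q γ x x := by
    intro γ x
    obtain ⟨a, ha, hma⟩ := my_vQuot_rep x
    exact ⟨a, a, ha, ha, hma, hma, qrefl a⟩
  have vzr : ValCompat v q → ∀ (γ : Γ) (x : vQuot v hv γ), vInd v hv q γ x 0 → x = 0 := by
    intro hc γ x hx
    obtain ⟨a, b, ha, hb, hma, hmb, hab⟩ := hx
    have hbγ : (γ : WithTop Γ) < v b := (my_vMk_eq_zero hb).mp hmb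
    have hba : v b ≤ v a := hc a b (q0 a) hab
    rw [← hma]
    exact (my_vMk_eq_zero ha).mpr (lt_of_lt_of_le hbγ hba)
  have vtrans : ValCompat v q → ∀ γ : Γ, Transitive (vInd v hv q γ) := by
    intro hc γ x y z hxy hyz
    by_cases hy0 : y = 0
    · rw [hy0] at hxy
      rw [vzr hc γ x hxy]
      exact vzl γ z
    by_cases hx0 : x = 0
    · rw [hx0]; exact vzl γ z
    by_cases hz0 : z = 0
    · rw [hz0] at hyz
      exact absurd (vzr hc γ y hyz) hy0
    obtain ⟨a, b, ha, hb, hma, hmb, hab⟩ := hxy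
    obtain ⟨b', c, hb', hcm, hmb', hmc, hbc⟩ := hyz
    have hab' : q a b' := my_W hv htr hD (mkstrict hc) rfl (hmb.trans hmb'.symm)
        (by rw [hma]; exact hx0) (by rw [hmb]; exact hy0) hab
    exact ⟨a, c, ha, hcm, hma, hmc, htr _ _ _ hab' hbc⟩
  have hDC : ValCompat v q → ∀ γ : Γ, Transitive (vInd v hv q γ) ∧ IsCqo (vInd v hv q γ) := by
    intro hc γ
    refine ⟨vtrans hc γ, ?_⟩
    rw [myIsCqo_iff]
    refine ⟨?_, fun a b c h1 h2 => vtrans hc γ h1 h2, vzr hc γ, ?_⟩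
    · intro x y
      obtain ⟨a, ha, hma⟩ := my_vQuot_rep x
      obtain ⟨b, hb, hmb⟩ := my_vQuot_rep y
      rcases tot a b with h | h
      · exact Or.inl ⟨a, b, ha, hb, hma, hmb, h⟩
      · exact Or.inr ⟨b, a, hb, ha, hmb, hma, h⟩
    · intro x y
      by_cases hy0 : y = 0
      · rw [hy0, sub_zero, neg_zero]
      by_cases hx0 : x = 0
      · constructor
        · intro _
          rw [hx0, zero_sub]
          exact vrefl γ (-y)
        · intro _
          rw [hx0]
          exact vzl γ y
      by_cases hxy : x = y
      · rw [hxy, sub_self]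
        constructor
        · intro _; exact vzl γ (-y)
        · intro _; exact vrefl γ y
      obtain ⟨a, ha, hma⟩ := my_vQuot_rep x
      obtain ⟨b, hb, hmb⟩ := my_vQuot_rep y
      have hsub : vMk v hv γ (a - b) (sub_mem ha hb) = x - y := by
        rw [my_vMk_sub ha hb, hma, hmb]
      have hneg : vMk v hv γ (-b) (neg_mem hb) = -y := by
        rw [my_vMk_neg hb, hmb]
      constructor
      · intro hxyq
        rw [← hma, ← hmb] at hxyq
        have hab : q a b := my_proj hv htr hD (mkstrict hc)
          (by rw [hma]; exact hx0) (by rw [hmb]; exact hy0) hxyq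
        exact ⟨a - b, -b, _, _, hsub, hneg, (hD a b).mp hab⟩
      · intro hq2
        rw [← hsub, ← hneg] at hq2
        have hsubq : q (a - b) (-b) := my_proj hv htr hD (mkstrict hc)
          (by rw [hsub]; exact sub_ne_zero.mpr hxy) (by rw [hneg]; exact neg_ne_zero.mpr hy0) hq2
        exact ⟨a, b, ha, hb, hma, hmb, (hD a b).mpr hsubq⟩
  refine ⟨⟨fun hA => hDB (hAD hA), fun hB => hDA (hBD hB)⟩,
          ⟨fun hA => hDC (hAD hA), fun hC => hDA (hCD hC)⟩,
          ⟨hAD, hDA⟩, ?_⟩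
  intro hc
  constructor
  · constructor
    · intro hvt γ x
      obtain ⟨a, ha, hma⟩ := my_vQuot_rep x
      have hmn : vMk v hv γ (-a) (neg_mem ha) = -x := by rw [my_vMk_neg ha, hma]
      exact ⟨⟨a, -a, ha, neg_mem ha, hma, hmn, (hvt a).1⟩,
             ⟨-a, a, neg_mem ha, ha, hmn, hma, (hvt a).2⟩⟩
    · intro hvt g
      by_cases hg0 : g = 0
      · rw [hg0]
        show q 0 (-0) ∧ q (-0) 0
        rw [neg_zero]
        exact ⟨qrefl 0, qrefl 0⟩
      · have hne : v g ≠ ⊤ := fun ht => hg0 ((hv.1 g).mp ht)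
        obtain ⟨γ, hγ⟩ := WithTop.ne_top_iff_exists.mp hne
        have hgm : g ∈ vGge v hv γ := mem_vGge_iff.mpr hγ.le
        have hnz : vMk v hv γ g hgm ≠ 0 := by
          intro h0
          rw [my_vMk_eq_zero] at h0
          rw [← hγ] at h0
          exact lt_irrefl _ h0
        have hnzn : vMk v hv γ (-g) (neg_mem hgm) ≠ 0 := by
          intro h0
          rw [my_vMk_eq_zero, my_vNeg hv] at h0
          rw [← hγ] at h0
          exact lt_irrefl _ h0
        obtain ⟨h1, h2⟩ := hvt γ (vMk v hv γ g hgm)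
        rw [← my_vMk_neg hgm] at h1 h2
        exact ⟨my_proj hv htr hD (mkstrict hc) hnz hnzn h1,
               my_proj hv htr hD (mkstrict hc) hnzn hnz h2⟩
  · constructor
    · intro h γ x
      by_cases hx0 : x = 0
      · exact Or.inr hx0
      · left
        obtain ⟨a, ha, hma⟩ := my_vQuot_rep x
        have hnz : vMk v hv γ a ha ≠ 0 := by rw [hma]; exact hx0
        have ha0 : a ≠ 0 := by
          intro h0
          apply hnz
          rw [my_vMk_eq_zero, h0, (hv.1 0).mpr rfl]
          exact WithTop.coe_lt_top γ
        rcases h a with hno | h0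
        · rintro ⟨e1, e2⟩
          apply hno
          have hmn : vMk v hv γ (-a) (neg_mem ha) = -x := by rw [my_vMk_neg ha, hma]
          have hnzn : vMk v hv γ (-a) (neg_mem ha) ≠ 0 := by
            rw [hmn]; exact neg_ne_zero.mpr hx0
          rw [← hma, ← my_vMk_neg ha] at e1 e2
          exact ⟨my_proj hv htr hD (mkstrict hc) hnz hnzn e1,
                 my_proj hv htr hD (mkstrict hc) hnzn hnz e2⟩
        · exact absurd h0 ha0
    · intro h g
      by_cases hg0 : g = 0
      · exact Or.inr hg0
      · left
        rintro ⟨e1, e2⟩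
        have hne : v g ≠ ⊤ := fun ht => hg0 ((hv.1 g).mp ht)
        obtain ⟨γ, hγ⟩ := WithTop.ne_top_iff_exists.mp hne
        have hgm : g ∈ vGge v hv γ := mem_vGge_iff.mpr hγ.le
        have hnz : vMk v hv γ g hgm ≠ 0 := by
          intro h0
          rw [my_vMk_eq_zero] at h0
          rw [← hγ] at h0
          exact lt_irrefl _ h0
        rcases h γ (vMk v hv γ g hgm) with hno | h0
        · apply hno
          have hmn : vMk v hv γ (-g) (neg_mem hgm) = -(vMk v hv γ g hgm) := my_vMk_neg hgm
          exact ⟨⟨g, -g, hgm, neg_mem hgm, rfl, hmn, e1⟩,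
                 ⟨-g, g, neg_mem hgm, hgm, hmn, rfl, e2⟩⟩
        · exact absurd h0 hnz
end
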